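/- arXiv:math/0610067 — 4 statements merged into one kernel-verified Lean document; each statement's English description precedes it below -/
import Mathlib

section
/- Let μ be the Thue–Morse morphism and let k ≥ 0. Set x = μ^{2k}(0) and w = 0·x·x. Then w is an overlap, but no proper contiguous subword of w is an overlap. -/
/-- An overlap: a word of the form `a·y·a·y·a` where `a` is a single letter
and `y` is a (possibly empty) word. -/
def IsOverlap {α : Type*} (w : List α) : Prop :=
  ∃ (a : α) (y : List α), w = [a] ++ y ++ [a] ++ y ++ [a]

/-- The Thue–Morse morphism `μ`, with `μ(0) = 01` and `μ(1) = 10`,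
applied letterwise to a word over `{0,1}`. -/
def mu : List (Fin 2) → List (Fin 2) :=
  fun w => w.flatMap fun a => if a = 0 then [0, 1] else [1, 0]

/-!
An overlap of period `n` inside `μ v` must have even period: otherwise every two consecutive
letters of it would differ (each lies in a block `ab` of `μ v`, or is translated into one by
the period), so its letters would alternate and its last letter, at odd distance `n` from the
first, would differ from it. With even period the overlap descends to an overlap of period
`n / 2` in `v`. Now `0·μ²x·μ²x` is a factor of `μ²(0·x·x)`, so an overlap of period `n` in
`w_{k+1} = 0·μ^{2k+2}(0)·μ^{2k+2}(0)` gives one of period `n / 4` in `w_k`; by induction every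
overlap in `w_k` has period `4^k` and hence length `|w_k|`, so it is `w_k` itself.
-/

/-- The factor `w[p] ⋯ w[p + 2n]` of `w` is an overlap `a·y·a·y·a` with `|a·y| = n`. -/
def HasOverlapAt {α : Type*} (w : List α) (p n : ℕ) : Prop :=
  0 < n ∧ p + 2 * n < w.length ∧ ∀ j ≤ n, w[p + j]? = w[p + j + n]?

section HasOverlapAt

variable {α : Type*}

theorem IsOverlap.exists_hasOverlapAt_zero {u : List α} (hu : IsOverlap u) :
    ∃ n, HasOverlapAt u 0 n ∧ u.length = 2 * n + 1 := by
  obtain ⟨a, y, rfl⟩ := hu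
  set z := a :: y
  have hu : [a] ++ y ++ [a] ++ y ++ [a] = z ++ (z ++ [a]) := by simp [z]
  have hz : 0 < z.length := by simp [z]
  rw [hu]
  refine ⟨z.length, ⟨hz, by simp; omega, fun j hj => ?_⟩, by simp; omega⟩
  rw [zero_add]
  conv_rhs => rw [List.getElem?_append_right (by omega), Nat.add_sub_cancel]
  rcases hj.lt_or_eq with hj | rfl
  · rw [List.getElem?_append_left hj, List.getElem?_append_left hj]
  · rw [List.getElem?_append_right le_rfl, Nat.sub_self, List.getElem?_append_left hz,
      List.getElem?_append_right le_rfl, Nat.sub_self]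
    rfl

theorem HasOverlapAt.exists_of_isInfix {u w : List α} {p n : ℕ} (h : HasOverlapAt u p n)
    (huw : u <:+: w) : ∃ q, HasOverlapAt w q n := by
  obtain ⟨hn, hlen, hper⟩ := h
  obtain ⟨s, t, rfl⟩ := huw
  have hget : ∀ i < u.length, (s ++ u ++ t)[s.length + i]? = u[i]? := fun i hi => by
    rw [List.append_assoc, List.getElem?_append_right (by omega), Nat.add_sub_cancel_left,
      List.getElem?_append_left hi]
  refine ⟨s.length + p, hn, by simp; omega, fun j hj => ?_⟩
  rw [add_assoc, hget _ (by omega), add_assoc, add_assoc, hget _ (by omega), ← add_assoc]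
  exact hper j hj

theorem getElem?_add_eq_map_iterate {w : List α} {f : α → α} {p n : ℕ}
    (h : ∀ j < n, w[p + j + 1]? = w[p + j]?.map f) : w[p + n]? = w[p]?.map f^[n] := by
  induction n with
  | zero => simp
  | succ n ih =>
    rw [← add_assoc, h n n.lt_succ_self, ih fun j hj => h j (by omega), Option.map_map,
      ← Function.iterate_succ']

end HasOverlapAt

theorem mu_cons (a : Fin 2) (v : List (Fin 2)) : mu (a :: v) = a :: (a + 1) :: mu v := by
  fin_cases a <;> rfl

theorem mu_append (u v : List (Fin 2)) : mu (u ++ v) = mu u ++ mu v := by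
  simp [mu]

theorem length_mu (v : List (Fin 2)) : (mu v).length = 2 * v.length := by
  induction v with
  | nil => rfl
  | cons a v ih => simp only [mu_cons, List.length_cons, ih]; ring

theorem getElem?_mu_two_mul (v : List (Fin 2)) (i : ℕ) : (mu v)[2 * i]? = v[i]? := by
  induction v generalizing i with
  | nil => simp [mu]
  | cons a v ih => cases i <;> simp [mu_cons, Nat.mul_succ, ih]

theorem getElem?_mu_two_mul_add_one (v : List (Fin 2)) (i : ℕ) :
    (mu v)[2 * i + 1]? = v[i]?.map (· + 1) := by
  induction v generalizing i with
  | nil => simp [mu]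
  | cons a v ih => cases i <;> simp [mu_cons, Nat.mul_succ, ih]

theorem HasOverlapAt.even_of_mu {v : List (Fin 2)} {p n : ℕ} (h : HasOverlapAt (mu v) p n) :
    Even n := by
  obtain ⟨hn, hlen, hper⟩ := h
  by_contra hodd
  obtain ⟨c, rfl⟩ := Nat.not_even_iff_odd.mp hodd
  have halt : ∀ j < 2 * c + 1, (mu v)[p + j + 1]? = (mu v)[p + j]?.map (· + 1) := by
    intro j hj
    obtain ⟨t, ht | ht⟩ := Nat.even_or_odd' (p + j)
    · rw [ht, getElem?_mu_two_mul_add_one, getElem?_mu_two_mul]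
    · have e1 := hper j hj.le
      have e2 := hper (j + 1) hj
      rw [show p + j + (2 * c + 1) = 2 * (t + c + 1) by omega] at e1
      rw [← add_assoc, show p + j + 1 + (2 * c + 1) = 2 * (t + c + 1) + 1 by omega] at e2
      rw [e1, e2, getElem?_mu_two_mul_add_one, getElem?_mu_two_mul]
  have hiter : (· + 1 : Fin 2 → Fin 2)^[2 * c + 1] = (· + 1) := by
    have hsq : (· + 1 : Fin 2 → Fin 2)^[2] = id := by funext x; fin_cases x <;> rfl
    rw [Function.iterate_succ, Function.iterate_mul, hsq, Function.iterate_id, Function.id_comp]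
  have hp := getElem?_add_eq_map_iterate halt
  have hclose := hper 0 (by omega)
  rw [add_zero] at hclose
  rw [← hclose, hiter, List.getElem?_eq_getElem (by omega)] at hp
  revert hp
  generalize (mu v)[p] = a
  fin_cases a <;> simp

theorem HasOverlapAt.of_mu {v : List (Fin 2)} {p m : ℕ} (h : HasOverlapAt (mu v) p (2 * m)) :
    HasOverlapAt v (p / 2) m := by
  obtain ⟨hn, hlen, hper⟩ := h
  rw [length_mu] at hlen
  refine ⟨by omega, by omega, fun j hj => ?_⟩
  have hj2 := hper (2 * j) (by omega)
  obtain ⟨q, hq | hq⟩ := Nat.even_or_odd' p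
  · rw [show p + 2 * j = 2 * (q + j) by omega, show 2 * (q + j) + 2 * m = 2 * (q + j + m) by omega,
      getElem?_mu_two_mul, getElem?_mu_two_mul] at hj2
    rwa [show p / 2 = q by omega]
  · rw [show p + 2 * j = 2 * (q + j) + 1 by omega,
      show 2 * (q + j) + 1 + 2 * m = 2 * (q + j + m) + 1 by omega,
      getElem?_mu_two_mul_add_one, getElem?_mu_two_mul_add_one] at hj2
    rw [show p / 2 = q by omega]
    exact Option.map_injective (add_left_injective 1) hj2

theorem HasOverlapAt.exists_of_mu {v : List (Fin 2)} {p n : ℕ} (h : HasOverlapAt (mu v) p n) :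
    ∃ m, n = 2 * m ∧ HasOverlapAt v (p / 2) m := by
  obtain ⟨m, rfl⟩ := even_iff_two_dvd.mp h.even_of_mu
  exact ⟨m, rfl, h.of_mu⟩

theorem iterate_mu_two_mul_succ (k : ℕ) (v : List (Fin 2)) :
    mu^[2 * (k + 1)] v = mu (mu (mu^[2 * k] v)) := by
  rw [Nat.mul_succ, Function.iterate_succ_apply', Function.iterate_succ_apply']

theorem length_iterate_mu_two_mul (k : ℕ) : (mu^[2 * k] [0]).length = 4 ^ k := by
  induction k with
  | zero => rfl
  | succ k ih => rw [iterate_mu_two_mul_succ, length_mu, length_mu, ih, pow_succ]; ring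

theorem exists_iterate_mu_two_mul_eq_append_zero (k : ℕ) :
    ∃ y, mu^[2 * k] [0] = y ++ [0] := by
  induction k with
  | zero => exact ⟨[], rfl⟩
  | succ k ih =>
    obtain ⟨y, hy⟩ := ih
    refine ⟨mu (mu y) ++ [0, 1, 1], ?_⟩
    rw [iterate_mu_two_mul_succ, hy, mu_append, mu_append, List.append_assoc]
    rfl

-- `μ²(0) = 0110`, so `μ²(0·x·x) = 011·(0·μ²x·μ²x)`.
theorem zero_cons_mu_mu_isInfix (x : List (Fin 2)) :
    (0 :: (mu (mu x) ++ mu (mu x))) <:+: mu (mu (0 :: (x ++ x))) :=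
  ⟨[0, 1, 1], [], by simp only [mu_cons, mu_append, List.append_nil]; rfl⟩

theorem HasOverlapAt.eq_four_pow {k p n : ℕ}
    (h : HasOverlapAt ((0 : Fin 2) :: (mu^[2 * k] [0] ++ mu^[2 * k] [0])) p n) : n = 4 ^ k := by
  induction k generalizing p n with
  | zero =>
    obtain ⟨hn, hlen, -⟩ := h
    change p + 2 * n < 3 at hlen
    omega
  | succ k ih =>
    rw [iterate_mu_two_mul_succ] at h
    obtain ⟨q, hq⟩ := h.exists_of_isInfix (zero_cons_mu_mu_isInfix _)
    obtain ⟨m, rfl, hm⟩ := hq.exists_of_mu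
    obtain ⟨l, rfl, hl⟩ := hm.exists_of_mu
    rw [ih hl, pow_succ]
    ring

/-- For `x = μ^{2k}(0)`, the word `w = 0·x·x` is an overlap, but no proper
contiguous subword of `w` is an overlap. -/
theorem zero_mu_mu_is_minimal_overlap (k : ℕ) :
    IsOverlap ((0 : Fin 2) :: (mu^[2 * k] [0] ++ mu^[2 * k] [0])) ∧
    ∀ u : List (Fin 2),
      u <:+: (0 : Fin 2) :: (mu^[2 * k] [0] ++ mu^[2 * k] [0]) →
      u ≠ (0 : Fin 2) :: (mu^[2 * k] [0] ++ mu^[2 * k] [0]) →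
      ¬ IsOverlap u := by
  constructor
  · obtain ⟨y, hy⟩ := exists_iterate_mu_two_mul_eq_append_zero k
    exact ⟨0, y, by simp [hy]⟩
  · intro u hinfix hne hu
    obtain ⟨n, hn, hlen⟩ := hu.exists_hasOverlapAt_zero
    obtain ⟨q, hq⟩ := hn.exists_of_isInfix hinfix
    refine hne (hinfix.eq_of_length ?_)
    simp only [hlen, hq.eq_four_pow, List.length_cons, List.length_append,
      length_iterate_mu_two_mul]
    ring
end

section
/- For every position i, at most one square begins at position i of the Thue–Morse word: if y and z are nonempty words such that both yy and zz occur in the Thue–Morse word t starting at the same position i, then y = z. -/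
/-!
A square `yy` occurring at position `i` of `t` gives `t (i + n) = t (i + n + |y|)` for `n < |y|`,
so it suffices to show that the period of such a square is determined by `i`. Since
`t n = (t (n / 2) + n % 2) % 2`, a square of period `2m` at `i` halves to squares of period `m` at
`i / 2` and at `(i + 1) / 2`. A square of odd period `p` has no two equal adjacent letters among its
first `p` letters (equal adjacent letters sit only at odd positions, and they would reappear `p`
later), which forces `p ∈ {1, 3}` and `i` odd. Halving then shows overlap-freeness, hence that
squares of even period start at even positions, and the period is determined by induction.
-/

/-- The Thue–Morse word: `t n = s₂(n) mod 2`, where `s₂(n)` is the sum of the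
binary digits of `n`. -/
def thueMorse (n : ℕ) : ℕ := (Nat.digits 2 n).sum % 2

/-- The finite word `u` occurs in the infinite word `w` starting at position `i`. -/
def OccursAt (w : ℕ → ℕ) (u : List ℕ) (i : ℕ) : Prop :=
  ∀ j : Fin u.length, u.get j = w (i + j)

def IsSquareAt {α : Type*} (w : ℕ → α) (p i : ℕ) : Prop :=
  ∀ n < p, w (i + n) = w (i + n + p)

namespace OccursAt

variable {w : ℕ → ℕ} {u v : List ℕ} {i : ℕ}

theorem getElem_eq (h : OccursAt w u i) (n : ℕ) (hn : n < u.length) : u[n] = w (i + n) :=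
  h ⟨n, hn⟩

theorem append_left (h : OccursAt w (u ++ v) i) : OccursAt w u i := fun j => by
  have := h.getElem_eq j (by simp; omega)
  rwa [List.getElem_append_left j.isLt] at this

theorem append_right (h : OccursAt w (u ++ v) i) : OccursAt w v (i + u.length) := fun j => by
  have := h.getElem_eq (u.length + j) (by simp)
  rw [List.getElem_append_right (by omega)] at this
  simpa [Nat.add_assoc] using this

theorem eq_of_length_eq (hu : OccursAt w u i) (hv : OccursAt w v i)
    (hlen : u.length = v.length) : u = v :=
  List.ext_getElem hlen fun n hnu hnv => by rw [hu.getElem_eq n hnu, hv.getElem_eq n hnv]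

theorem isSquareAt (h : OccursAt w (u ++ u) i) : IsSquareAt w u.length i := fun n hn => by
  rw [← h.append_left.getElem_eq n hn, h.append_right.getElem_eq n hn]
  ac_rfl

end OccursAt

theorem thueMorse_lt_two (n : ℕ) : thueMorse n < 2 :=
  Nat.mod_lt _ two_pos

theorem thueMorse_eq_div_two (n : ℕ) : thueMorse n = (thueMorse (n / 2) + n % 2) % 2 := by
  rcases Nat.eq_zero_or_pos n with rfl | hn
  · rfl
  · simp only [thueMorse, Nat.digits_def' one_lt_two hn, List.sum_cons]
    omega

theorem thueMorse_eq_iff_of_mod_two_eq {a b : ℕ} (h : a % 2 = b % 2) :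
    thueMorse a = thueMorse b ↔ thueMorse (a / 2) = thueMorse (b / 2) := by
  rw [thueMorse_eq_div_two a, thueMorse_eq_div_two b]
  have := thueMorse_lt_two (a / 2)
  have := thueMorse_lt_two (b / 2)
  omega

theorem mod_two_eq_one_of_thueMorse_eq_succ {n : ℕ} (h : thueMorse n = thueMorse (n + 1)) :
    n % 2 = 1 := by
  rw [thueMorse_eq_div_two n, thueMorse_eq_div_two (n + 1)] at h
  have := thueMorse_lt_two (n / 2)
  by_contra hn
  rw [show (n + 1) / 2 = n / 2 by omega] at h
  omega

theorem thueMorse_add_two_ne_of_eq {n : ℕ} (h : thueMorse n = thueMorse (n + 2)) :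
    thueMorse (n + 2) ≠ thueMorse (n + 4) := by
  intro h'
  rw [thueMorse_eq_iff_of_mod_two_eq (by omega)] at h h'
  rw [show (n + 2) / 2 = n / 2 + 1 by omega] at h h'
  rw [show (n + 4) / 2 = n / 2 + 1 + 1 by omega] at h'
  have := mod_two_eq_one_of_thueMorse_eq_succ h
  have := mod_two_eq_one_of_thueMorse_eq_succ h'
  omega

namespace IsSquareAt

variable {p i : ℕ}

theorem div_two {m e : ℕ} (he : e < 2) (h : IsSquareAt thueMorse (2 * m) i) :
    IsSquareAt thueMorse m ((i + e) / 2) := fun k hk => by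
  have := h (2 * k + e) (by omega)
  rw [thueMorse_eq_iff_of_mod_two_eq (by omega)] at this
  convert this using 2 <;> omega

theorem thueMorse_ne_succ (h : IsSquareAt thueMorse p i) (hp : Odd p) {n : ℕ} (hin : i ≤ n)
    (hn : n + 1 < i + p) : thueMorse n ≠ thueMorse (n + 1) := by
  intro hn_eq
  obtain ⟨d, rfl⟩ := Nat.exists_eq_add_of_le hin
  have e0 := h d (by omega)
  have e1 := h (d + 1) (by omega)
  rw [← add_assoc] at e1
  have hn_eq' : thueMorse (i + d + p) = thueMorse (i + d + p + 1) := by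
    rw [← e0, hn_eq, e1, add_right_comm]
  have := mod_two_eq_one_of_thueMorse_eq_succ hn_eq
  have := mod_two_eq_one_of_thueMorse_eq_succ hn_eq'
  obtain ⟨k, rfl⟩ := hp
  omega

theorem le_three_of_odd (h : IsSquareAt thueMorse p i) (hp : Odd p) : p ≤ 3 := by
  by_contra! hp3
  have hp5 : 5 ≤ p := by obtain ⟨k, rfl⟩ := hp; omega
  have h0 : thueMorse i ≠ thueMorse (i + 1) := h.thueMorse_ne_succ hp le_rfl (by omega)
  have h1 : thueMorse (i + 1) ≠ thueMorse (i + 2) := h.thueMorse_ne_succ hp (by omega) (by omega)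
  have h2 : thueMorse (i + 2) ≠ thueMorse (i + 3) := h.thueMorse_ne_succ hp (by omega) (by omega)
  have h3 : thueMorse (i + 3) ≠ thueMorse (i + 4) := h.thueMorse_ne_succ hp (by omega) (by omega)
  have := thueMorse_lt_two i
  have := thueMorse_lt_two (i + 1)
  have := thueMorse_lt_two (i + 2)
  have := thueMorse_lt_two (i + 3)
  have := thueMorse_lt_two (i + 4)
  exact thueMorse_add_two_ne_of_eq (n := i) (by omega) (by omega)

theorem mod_two_eq_one_of_odd (h : IsSquareAt thueMorse p i) (hp : Odd p) : i % 2 = 1 := by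
  have := h.le_three_of_odd hp
  rcases (show p = 1 ∨ p = 3 by obtain ⟨k, rfl⟩ := hp; omega) with rfl | rfl
  · exact mod_two_eq_one_of_thueMorse_eq_succ (by simpa using h 0 one_pos)
  · have h0 : thueMorse i ≠ thueMorse (i + 1) := h.thueMorse_ne_succ hp le_rfl (by omega)
    have h1 : thueMorse (i + 1) ≠ thueMorse (i + 2) :=
      h.thueMorse_ne_succ hp (by omega) (by omega)
    have e0 : thueMorse i = thueMorse (i + 3) := by simpa using h 0 (by norm_num)
    have := thueMorse_lt_two i
    have := thueMorse_lt_two (i + 1)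
    have := thueMorse_lt_two (i + 2)
    have h23 : thueMorse (i + 2) = thueMorse (i + 3) := by omega
    have := mod_two_eq_one_of_thueMorse_eq_succ h23
    omega

theorem not_isSquareAt_three (h : IsSquareAt thueMorse 1 i) : ¬ IsSquareAt thueMorse 3 i :=
  fun h₃ => h₃.thueMorse_ne_succ ⟨1, rfl⟩ le_rfl (by omega) (by simpa using h 0 one_pos)

theorem half_of_even {m s : ℕ} (h : IsSquareAt thueMorse (2 * m) (2 * s)) :
    IsSquareAt thueMorse m s := by
  convert h.div_two (e := 0) (by norm_num) using 1
  omega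

theorem half_of_odd {m s : ℕ} (h : IsSquareAt thueMorse (2 * m) (2 * s + 1)) :
    IsSquareAt thueMorse m s ∧ IsSquareAt thueMorse m (s + 1) := by
  constructor
  · convert h.div_two (e := 0) (by norm_num) using 1
    omega
  · convert h.div_two (e := 1) (by norm_num) using 1
    omega

theorem not_succ (hp : 0 < p) (h : IsSquareAt thueMorse p i) :
    ¬ IsSquareAt thueMorse p (i + 1) := by
  induction p using Nat.strong_induction_on generalizing i with
  | _ p ih =>
    intro h'
    obtain ⟨m, rfl | rfl⟩ := Nat.even_or_odd' p
    · obtain ⟨s, rfl | rfl⟩ := Nat.even_or_odd' i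
      · obtain ⟨hs, hs'⟩ := h'.half_of_odd
        exact ih m (by omega) (by omega) hs hs'
      · obtain ⟨hs, hs'⟩ := h.half_of_odd
        exact ih m (by omega) (by omega) hs hs'
    · have := h.mod_two_eq_one_of_odd (odd_two_mul_add_one m)
      have := h'.mod_two_eq_one_of_odd (odd_two_mul_add_one m)
      omega

theorem mod_two_eq_zero_of_two_mul {m : ℕ} (hm : 0 < m) (h : IsSquareAt thueMorse (2 * m) i) :
    i % 2 = 0 := by
  obtain ⟨s, rfl | rfl⟩ := Nat.even_or_odd' i
  · omega
  · obtain ⟨hs, hs'⟩ := h.half_of_odd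
    exact absurd hs' (hs.not_succ hm)

theorem period_eq {q : ℕ} (hp : 0 < p) (hq : 0 < q) (h : IsSquareAt thueMorse p i)
    (h' : IsSquareAt thueMorse q i) : p = q := by
  induction p using Nat.strong_induction_on generalizing q i with
  | _ p ih =>
    obtain ⟨m, rfl | rfl⟩ := Nat.even_or_odd' p <;>
      obtain ⟨n, rfl | rfl⟩ := Nat.even_or_odd' q
    · obtain ⟨s, rfl | rfl⟩ := Nat.even_or_odd' i
      · have := ih m (by omega) (by omega) (by omega) h.half_of_even h'.half_of_even
        omega
      · have := h.mod_two_eq_zero_of_two_mul (by omega)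
        omega
    · have := h.mod_two_eq_zero_of_two_mul (by omega)
      have := h'.mod_two_eq_one_of_odd (odd_two_mul_add_one n)
      omega
    · have := h.mod_two_eq_one_of_odd (odd_two_mul_add_one m)
      have := h'.mod_two_eq_zero_of_two_mul (by omega)
      omega
    · have := h.le_three_of_odd (odd_two_mul_add_one m)
      have := h'.le_three_of_odd (odd_two_mul_add_one n)
      rcases (by omega : m = 0 ∨ m = 1) with rfl | rfl <;>
        rcases (by omega : n = 0 ∨ n = 1) with rfl | rfl
      · rfl
      · exact absurd h' h.not_isSquareAt_three
      · exact absurd h h'.not_isSquareAt_three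
      · rfl

end IsSquareAt

/-- At most one square begins at any given position of the Thue–Morse word:
if `yy` and `zz` are squares occurring in `t` at the same position `i`, then `y = z`. -/
theorem thueMorse_at_most_one_square_per_position
    (y z : List ℕ) (hy : y ≠ []) (hz : z ≠ []) (i : ℕ)
    (h1 : OccursAt thueMorse (y ++ y) i) (h2 : OccursAt thueMorse (z ++ z) i) :
    y = z :=
  h1.append_left.eq_of_length_eq h2.append_left <|
    h1.isSquareAt.period_eq (List.length_pos_iff.mpr hy) (List.length_pos_iff.mpr hz)
      h2.isSquareAt
end

section
/- The first difference sequence Δ = (p_t(n+1) − p_t(n))_{n≥1} of the subword complexity function of the Thue–Morse word is not ultimately periodic. -/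
/-- The subword complexity of the infinite word `w`: the number of distinct
contiguous subwords (factors) of `w` of length `n`, a factor of length `n`
being identified with the function `Fin n → ℕ` giving its letters. -/
noncomputable def complexity (w : ℕ → ℕ) (n : ℕ) : ℕ :=
  Set.ncard {f : Fin n → ℕ | ∃ i : ℕ, ∀ j : Fin n, f j = w (i + j)}

lemma tm_le_one (n : ℕ) : thueMorse n ≤ 1 :=
  Nat.lt_succ_iff.mp (Nat.mod_lt _ (by norm_num))

lemma tm_double (n : ℕ) : thueMorse (2 * n) = thueMorse n := by
  rcases Nat.eq_zero_or_pos n with h | h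
  · simp [h]
  · unfold thueMorse
    rw [Nat.digits_def' (by norm_num : (1:ℕ) < 2) (by omega)]
    simp [Nat.mul_mod_right, Nat.mul_div_cancel_left _ (by norm_num : 0 < 2)]

lemma tm_odd (n : ℕ) : thueMorse (2 * n + 1) = 1 - thueMorse n := by
  unfold thueMorse
  rw [Nat.digits_def' (by norm_num : (1:ℕ) < 2) (by omega)]
  have h1 : (2 * n + 1) % 2 = 1 := by omega
  have h2 : (2 * n + 1) / 2 = n := by omega
  rw [h1, h2]
  simp only [List.sum_cons]
  have := Nat.mod_lt (Nat.digits 2 n).sum (show 0 < 2 by norm_num)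
  omega

lemma pair_odd (k : ℕ) (h : thueMorse k = thueMorse (k + 1)) : k % 2 = 1 := by
  by_contra hk
  obtain ⟨j, rfl⟩ : ∃ j, k = 2 * j := ⟨k / 2, by omega⟩
  rw [tm_double, tm_odd] at h
  have := tm_le_one j
  omega

lemma no_triple (k : ℕ) (h1 : thueMorse k = thueMorse (k + 1))
    (h2 : thueMorse (k + 1) = thueMorse (k + 2)) : False := by
  have o1 := pair_odd k h1
  have o2 := pair_odd (k + 1) h2
  omega

lemma repeat5 (x : ℕ) : ∃ d, d ≤ 3 ∧ thueMorse (x + d) = thueMorse (x + d + 1) := by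
  by_contra h
  push_neg at h
  have h0 := h 0 (by omega)
  have h1 := h 1 (by omega)
  have h2 := h 2 (by omega)
  have h3 := h 3 (by omega)
  simp only [Nat.add_zero] at h0
  rw [show x + 1 + 1 = x + 2 from by omega] at h1
  rw [show x + 2 + 1 = x + 3 from by omega] at h2
  rw [show x + 3 + 1 = x + 4 from by omega] at h3
  have b0 := tm_le_one x
  have b1 := tm_le_one (x + 1)
  have b2 := tm_le_one (x + 2)
  have b3 := tm_le_one (x + 3)
  have b4 := tm_le_one (x + 4)
  -- alternation: t x = t (x+2) = t (x+4)
  have e02 : thueMorse x = thueMorse (x + 2) := by omega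
  have e24 : thueMorse (x + 2) = thueMorse (x + 4) := by omega
  rcases Nat.even_or_odd x with hx | hx
  · obtain ⟨j, hj⟩ := hx
    have hj' : x = 2 * j := by omega
    subst hj'
    have r2 : thueMorse (2 * j + 2) = thueMorse (j + 1) := by
      rw [show 2 * j + 2 = 2 * (j + 1) from by ring, tm_double]
    have r4 : thueMorse (2 * j + 4) = thueMorse (j + 2) := by
      rw [show 2 * j + 4 = 2 * (j + 2) from by ring, tm_double]
    rw [tm_double] at e02
    rw [r2] at e02 e24
    rw [r4] at e24
    exact no_triple j e02 e24
  · obtain ⟨j, hj⟩ := hx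
    subst hj
    have r0 : thueMorse (2 * j + 1) = 1 - thueMorse j := tm_odd j
    have r2 : thueMorse (2 * j + 1 + 2) = 1 - thueMorse (j + 1) := by
      rw [show 2 * j + 1 + 2 = 2 * (j + 1) + 1 from by ring, tm_odd]
    have r4 : thueMorse (2 * j + 1 + 4) = 1 - thueMorse (j + 2) := by
      rw [show 2 * j + 1 + 4 = 2 * (j + 2) + 1 from by ring, tm_odd]
    rw [r0, r2] at e02
    rw [r2, r4] at e24
    have c0 := tm_le_one j
    have c1 := tm_le_one (j + 1)
    have c2 := tm_le_one (j + 2)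
    have e1 : thueMorse j = thueMorse (j + 1) := by omega
    have e2 : thueMorse (j + 1) = thueMorse (j + 2) := by omega
    exact no_triple j e1 e2

lemma shift_contra (i i' : ℕ)
    (H : ∀ d, d ≤ 4 → thueMorse (2 * i + d) = thueMorse (2 * i' + 1 + d)) : False := by
  obtain ⟨d, hd3, hdd⟩ := repeat5 (2 * i)
  have h1 := pair_odd _ hdd
  have h2 : thueMorse (2 * i' + 1 + d) = thueMorse (2 * i' + 1 + d + 1) := by
    have hA := H d (by omega)
    have hB := H (d + 1) (by omega)
    rw [show 2 * i + (d + 1) = 2 * i + d + 1 from by omega,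
        show 2 * i' + 1 + (d + 1) = 2 * i' + 1 + d + 1 from by omega] at hB
    rw [← hA, ← hB]
    exact hdd
  have h3 := pair_odd _ h2
  omega

/-- set of factors of length n -/
def tmF (n : ℕ) : Set (Fin n → ℕ) :=
  {f : Fin n → ℕ | ∃ i : ℕ, ∀ j : Fin n, f j = thueMorse (i + j)}

lemma complexity_eq (n : ℕ) : complexity thueMorse n = (tmF n).ncard := rfl

/-- window -/
def win (i n : ℕ) : Fin n → ℕ := fun j => thueMorse (i + j)

lemma win_mem (i n : ℕ) : win i n ∈ tmF n := ⟨i, fun _ => rfl⟩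

lemma mem_tmF {n : ℕ} {f : Fin n → ℕ} : f ∈ tmF n ↔ ∃ i, f = win i n := by
  constructor
  · rintro ⟨i, hi⟩; exact ⟨i, funext hi⟩
  · rintro ⟨i, rfl⟩; exact win_mem i n

lemma tmF_le_one {n : ℕ} {f : Fin n → ℕ} (hf : f ∈ tmF n) (j : Fin n) : f j ≤ 1 := by
  obtain ⟨i, rfl⟩ := mem_tmF.mp hf
  exact tm_le_one _

lemma tmF_finite (n : ℕ) : (tmF n).Finite := by
  have h1 : tmF n ⊆ Set.pi Set.univ (fun _ : Fin n => ({0, 1} : Set ℕ)) := by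
    intro f hf j _
    have := tmF_le_one hf j
    interval_cases h : f j <;> simp
  exact (Set.Finite.pi (fun _ => (Set.finite_singleton 1).insert 0)).subset h1

/-- `p n` -/
noncomputable def pc (n : ℕ) : ℕ := (tmF n).ncard

lemma pc_mono (n : ℕ) : pc n ≤ pc (n + 1) := by
  have hsub : tmF n ⊆ (fun g : Fin (n+1) → ℕ => g ∘ Fin.castSucc) '' tmF (n + 1) := by
    intro f hf
    obtain ⟨i, rfl⟩ := mem_tmF.mp hf
    exact ⟨win i (n+1), win_mem i (n+1), rfl⟩
  calc pc n ≤ ((fun g : Fin (n+1) → ℕ => g ∘ Fin.castSucc) '' tmF (n + 1)).ncard :=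
        Set.ncard_le_ncard hsub ((tmF_finite (n+1)).image _)
    _ ≤ pc (n + 1) := Set.ncard_image_le (tmF_finite (n+1))

lemma pc_le_pc {a b : ℕ} (h : a ≤ b) : pc a ≤ pc b := by
  induction b, h using Nat.le_induction with
  | base => exact le_rfl
  | succ n hn ih => exact le_trans ih (pc_mono n)

def phi0 (m : ℕ) (f : Fin (m + 1) → ℕ) : Fin (2 * m + 1) → ℕ :=
  fun j => if _h : j.val % 2 = 0 then f ⟨j.val / 2, by have := j.isLt; omega⟩
           else 1 - f ⟨j.val / 2, by have := j.isLt; omega⟩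

def phi1 (m : ℕ) (f : Fin (m + 1) → ℕ) : Fin (2 * m + 1) → ℕ :=
  fun j => if h : j.val % 2 = 0 then 1 - f ⟨j.val / 2, by have := j.isLt; omega⟩
           else f ⟨j.val / 2 + 1, by have := j.isLt; omega⟩

def psi0 (m : ℕ) (f : Fin m → ℕ) : Fin (2 * m) → ℕ :=
  fun j => if _h : j.val % 2 = 0 then f ⟨j.val / 2, by have := j.isLt; omega⟩
           else 1 - f ⟨j.val / 2, by have := j.isLt; omega⟩

def psi1 (m : ℕ) (f : Fin (m + 1) → ℕ) : Fin (2 * m) → ℕ :=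
  fun j => if h : j.val % 2 = 0 then 1 - f ⟨j.val / 2, by have := j.isLt; omega⟩
           else f ⟨j.val / 2 + 1, by have := j.isLt; omega⟩

lemma phi0_win (i m : ℕ) : phi0 m (win i (m + 1)) = win (2 * i) (2 * m + 1) := by
  funext j
  simp only [phi0, win]
  split_ifs with h
  · rw [show 2 * i + (j : ℕ) = 2 * (i + (j : ℕ) / 2) from by omega, tm_double]
  · rw [show 2 * i + (j : ℕ) = 2 * (i + (j : ℕ) / 2) + 1 from by omega, tm_odd]

lemma phi1_win (i m : ℕ) : phi1 m (win i (m + 1)) = win (2 * i + 1) (2 * m + 1) := by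
  funext j
  simp only [phi1, win]
  split_ifs with h
  · rw [show 2 * i + 1 + (j : ℕ) = 2 * (i + (j : ℕ) / 2) + 1 from by omega, tm_odd]
  · rw [show 2 * i + 1 + (j : ℕ) = 2 * (i + ((j : ℕ) / 2 + 1)) from by omega, tm_double]

lemma psi0_win (i m : ℕ) : psi0 m (win i m) = win (2 * i) (2 * m) := by
  funext j
  simp only [psi0, win]
  split_ifs with h
  · rw [show 2 * i + (j : ℕ) = 2 * (i + (j : ℕ) / 2) from by omega, tm_double]
  · rw [show 2 * i + (j : ℕ) = 2 * (i + (j : ℕ) / 2) + 1 from by omega, tm_odd]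

lemma psi1_win (i m : ℕ) : psi1 m (win i (m + 1)) = win (2 * i + 1) (2 * m) := by
  funext j
  simp only [psi1, win]
  split_ifs with h
  · rw [show 2 * i + 1 + (j : ℕ) = 2 * (i + (j : ℕ) / 2) + 1 from by omega, tm_odd]
  · rw [show 2 * i + 1 + (j : ℕ) = 2 * (i + ((j : ℕ) / 2 + 1)) from by omega, tm_double]

lemma odd_decomp (m : ℕ) :
    tmF (2 * m + 1) = phi0 m '' tmF (m + 1) ∪ phi1 m '' tmF (m + 1) := by
  apply Set.Subset.antisymm
  · intro f hf
    obtain ⟨i, rfl⟩ := mem_tmF.mp hf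
    rcases Nat.even_or_odd i with hi | hi
    · obtain ⟨q, hq⟩ := hi
      left
      exact ⟨win q (m + 1), win_mem q (m + 1), by rw [phi0_win, show 2 * q = i from by omega]⟩
    · obtain ⟨q, hq⟩ := hi
      right
      exact ⟨win q (m + 1), win_mem q (m + 1), by rw [phi1_win, show 2 * q + 1 = i from by omega]⟩
  · rintro f (⟨g, hg, rfl⟩ | ⟨g, hg, rfl⟩) <;> obtain ⟨i, rfl⟩ := mem_tmF.mp hg
    · rw [phi0_win]; exact win_mem _ _
    · rw [phi1_win]; exact win_mem _ _

lemma even_subset (m : ℕ) :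
    tmF (2 * m) ⊆ psi0 m '' tmF m ∪ psi1 m '' tmF (m + 1) := by
  intro f hf
  obtain ⟨i, rfl⟩ := mem_tmF.mp hf
  rcases Nat.even_or_odd i with hi | hi
  · obtain ⟨q, hq⟩ := hi
    left
    exact ⟨win q m, win_mem q m, by rw [psi0_win, show 2 * q = i from by omega]⟩
  · obtain ⟨q, hq⟩ := hi
    right
    exact ⟨win q (m + 1), win_mem q (m + 1), by rw [psi1_win, show 2 * q + 1 = i from by omega]⟩

lemma pc_even_upper (m : ℕ) : pc (2 * m) ≤ pc m + pc (m + 1) := by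
  calc pc (2 * m) ≤ (psi0 m '' tmF m ∪ psi1 m '' tmF (m + 1)).ncard :=
        Set.ncard_le_ncard (even_subset m)
          (((tmF_finite m).image _).union ((tmF_finite (m + 1)).image _))
    _ ≤ (psi0 m '' tmF m).ncard + (psi1 m '' tmF (m + 1)).ncard := Set.ncard_union_le _ _
    _ ≤ pc m + pc (m + 1) :=
        add_le_add (Set.ncard_image_le (tmF_finite m)) (Set.ncard_image_le (tmF_finite (m + 1)))

lemma pc_odd_upper (m : ℕ) : pc (2 * m + 1) ≤ 2 * pc (m + 1) := by
  rw [pc, odd_decomp m]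
  calc (phi0 m '' tmF (m + 1) ∪ phi1 m '' tmF (m + 1)).ncard
      ≤ (phi0 m '' tmF (m + 1)).ncard + (phi1 m '' tmF (m + 1)).ncard := Set.ncard_union_le _ _
    _ ≤ pc (m + 1) + pc (m + 1) :=
        add_le_add (Set.ncard_image_le (tmF_finite (m + 1))) (Set.ncard_image_le (tmF_finite (m + 1)))
    _ = 2 * pc (m + 1) := by ring

lemma phi0_inj (m : ℕ) : Function.Injective (phi0 m) := by
  intro f g h
  funext a
  have := congrFun h ⟨2 * a.val, by have := a.isLt; omega⟩
  simp only [phi0] at this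
  rw [dif_pos (by omega)] at this
  simpa [Nat.mul_div_cancel_left a.val (show 0 < 2 from by norm_num)] using this

lemma phi1_injOn (m : ℕ) : Set.InjOn (phi1 m) (tmF (m + 1)) := by
  intro f hf g hg h
  funext a
  have hc := congrFun h ⟨2 * a.val, by have := a.isLt; omega⟩
  simp only [phi1] at hc
  rw [dif_pos (by omega)] at hc
  have hc' : 1 - f a = 1 - g a := by
    simpa [Nat.mul_div_cancel_left a.val (show 0 < 2 from by norm_num)] using hc
  have h1 := tmF_le_one hf a
  have h2 := tmF_le_one hg a
  omega

lemma disj (m : ℕ) (hm : 2 ≤ m) :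
    Disjoint (phi0 m '' tmF (m + 1)) (phi1 m '' tmF (m + 1)) := by
  rw [Set.disjoint_left]
  rintro f ⟨g, hg, rfl⟩ ⟨g', hg', he⟩
  obtain ⟨i, rfl⟩ := mem_tmF.mp hg
  obtain ⟨i', rfl⟩ := mem_tmF.mp hg'
  rw [phi0_win, phi1_win] at he
  refine shift_contra i i' (fun d hd => ?_)
  have := congrFun he ⟨d, by omega⟩
  simpa [win] using this.symm

lemma pc_odd_lower (m : ℕ) (hm : 2 ≤ m) : 2 * pc (m + 1) ≤ pc (2 * m + 1) := by
  simp only [pc]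
  rw [odd_decomp m]
  rw [Set.ncard_union_eq (disj m hm) ((tmF_finite (m + 1)).image _) ((tmF_finite (m + 1)).image _)]
  rw [Set.ncard_image_of_injOn ((phi0_inj m).injOn), Set.ncard_image_of_injOn (phi1_injOn m)]
  omega

lemma fin2_eta (f : Fin 2 → ℕ) : f = ![f 0, f 1] := by
  funext j; fin_cases j <;> rfl

lemma fin3_eta (f : Fin 3 → ℕ) : f = ![f 0, f 1, f 2] := by
  funext j; fin_cases j <;> rfl

lemma pc2 : pc 2 ≤ 4 := by
  have hsub : tmF 2 ⊆ ↑({![0,0], ![0,1], ![1,0], ![1,1]} : Finset (Fin 2 → ℕ)) := by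
    intro f hf
    have h0 := tmF_le_one hf 0
    have h1 := tmF_le_one hf 1
    have he := fin2_eta f
    simp only [Finset.coe_insert, Set.mem_insert_iff, Finset.coe_singleton, Set.mem_singleton_iff]
    interval_cases hv0 : f 0 <;> interval_cases hv1 : f 1 <;>
      simp [he, hv0, hv1] <;> tauto
  calc pc 2 ≤ (↑({![0,0], ![0,1], ![1,0], ![1,1]} : Finset (Fin 2 → ℕ)) : Set (Fin 2 → ℕ)).ncard :=
        Set.ncard_le_ncard hsub (Finset.finite_toSet _)
    _ = 4 := by rw [Set.ncard_coe_finset]; decide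

lemma pc3 : pc 3 ≤ 6 := by
  have hsub : tmF 3 ⊆ ↑({![0,0,1], ![0,1,0], ![0,1,1], ![1,0,0], ![1,0,1], ![1,1,0]} :
      Finset (Fin 3 → ℕ)) := by
    intro f hf
    have h0 := tmF_le_one hf 0
    have h1 := tmF_le_one hf 1
    have h2 := tmF_le_one hf 2
    obtain ⟨i, hi⟩ := hf
    have e0 : f 0 = thueMorse i := by simpa using hi 0
    have e1 : f 1 = thueMorse (i + 1) := by simpa using hi 1
    have e2 : f 2 = thueMorse (i + 2) := by simpa using hi 2
    have hnt : ¬ (f 0 = f 1 ∧ f 1 = f 2) := by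
      rintro ⟨a, b⟩
      rw [e0, e1] at a
      rw [e1, e2] at b
      exact no_triple i a b
    have he := fin3_eta f
    simp only [Finset.coe_insert, Set.mem_insert_iff, Finset.coe_singleton, Set.mem_singleton_iff]
    interval_cases hv0 : f 0 <;> interval_cases hv1 : f 1 <;> interval_cases hv2 : f 2 <;>
      first
      | tauto
      | exact absurd ⟨rfl, rfl⟩ hnt
  calc pc 3 ≤ (↑({![0,0,1], ![0,1,0], ![0,1,1], ![1,0,0], ![1,0,1], ![1,1,0]} :
          Finset (Fin 3 → ℕ)) : Set (Fin 3 → ℕ)).ncard :=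
        Set.ncard_le_ncard hsub (Finset.finite_toSet _)
    _ = 6 := by rw [Set.ncard_coe_finset]; decide

def S4 : Finset (Fin 4 → ℕ) :=
  {![0,1,1,0], ![1,1,0,1], ![1,0,1,0], ![0,1,0,0], ![1,0,0,1],
   ![0,0,1,1], ![1,1,0,0], ![0,0,1,0], ![0,1,0,1], ![1,0,1,1]}

lemma tmval : thueMorse 0 = 0 ∧ thueMorse 1 = 1 ∧ thueMorse 2 = 1 ∧ thueMorse 3 = 0 ∧
    thueMorse 4 = 1 ∧ thueMorse 5 = 0 ∧ thueMorse 6 = 0 ∧ thueMorse 7 = 1 ∧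
    thueMorse 8 = 1 ∧ thueMorse 9 = 0 ∧ thueMorse 10 = 0 ∧ thueMorse 11 = 1 ∧
    thueMorse 12 = 0 ∧ thueMorse 13 = 1 ∧ thueMorse 14 = 1 := by
  norm_num [thueMorse]

lemma pc4 : 10 ≤ pc 4 := by
  obtain ⟨v0,v1,v2,v3,v4,v5,v6,v7,v8,v9,v10,v11,v12,v13,v14⟩ := tmval
  have hsub : (↑S4 : Set (Fin 4 → ℕ)) ⊆ tmF 4 := by
    intro f hf
    simp only [S4, Finset.coe_insert, Set.mem_insert_iff, Finset.coe_singleton,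
      Set.mem_singleton_iff] at hf
    rcases hf with rfl|rfl|rfl|rfl|rfl|rfl|rfl|rfl|rfl|rfl
    · exact ⟨0, by intro j; fin_cases j <;> simp [v0,v1,v2,v3]⟩
    · exact ⟨1, by intro j; fin_cases j <;> simp [v1,v2,v3,v4]⟩
    · exact ⟨2, by intro j; fin_cases j <;> simp [v2,v3,v4,v5]⟩
    · exact ⟨3, by intro j; fin_cases j <;> simp [v3,v4,v5,v6]⟩
    · exact ⟨4, by intro j; fin_cases j <;> simp [v4,v5,v6,v7]⟩
    · exact ⟨5, by intro j; fin_cases j <;> simp [v5,v6,v7,v8]⟩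
    · exact ⟨7, by intro j; fin_cases j <;> simp [v7,v8,v9,v10]⟩
    · exact ⟨9, by intro j; fin_cases j <;> simp [v9,v10,v11,v12]⟩
    · exact ⟨10, by intro j; fin_cases j <;> simp [v10,v11,v12,v13]⟩
    · exact ⟨11, by intro j; fin_cases j <;> simp [v11,v12,v13,v14]⟩
  calc (10 : ℕ) = S4.card := by decide
    _ = (↑S4 : Set (Fin 4 → ℕ)).ncard := (Set.ncard_coe_finset S4).symm
    _ ≤ pc 4 := Set.ncard_le_ncard hsub (tmF_finite 4)

lemma pc16 : pc 16 ≤ 46 := by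
  have h4 : pc 4 ≤ 10 := by have h := pc_even_upper 2; norm_num at h; have := pc2; have := pc3; omega
  have h5 : pc 5 ≤ 12 := by have h := pc_odd_upper 2; norm_num at h; have := pc3; omega
  have h8 : pc 8 ≤ 22 := by have h := pc_even_upper 4; norm_num at h; omega
  have h9 : pc 9 ≤ 24 := by have h := pc_odd_upper 4; norm_num at h; omega
  have h16 : pc 16 ≤ 46 := by have h := pc_even_upper 8; norm_num at h; omega
  exact h16

lemma hb_seq : ∀ k : ℕ, 10 * 2 ^ k ≤ pc (3 * 2 ^ k + 1) := by
  intro k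
  induction k with
  | zero => simpa using pc4
  | succ k ih =>
      have h2 : (1:ℕ) ≤ 2 ^ k := Nat.one_le_two_pow
      have hlow := pc_odd_lower (3 * 2 ^ k) (by omega)
      have e : 2 * (3 * 2 ^ k) + 1 = 3 * 2 ^ (k + 1) + 1 := by ring
      rw [e] at hlow
      have e2 : 3 * 2 ^ k + 1 = 3 * 2 ^ k + 1 := rfl
      calc 10 * 2 ^ (k + 1) = 2 * (10 * 2 ^ k) := by ring
        _ ≤ 2 * pc (3 * 2 ^ k + 1) := by omega
        _ ≤ pc (3 * 2 ^ (k + 1) + 1) := hlow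

lemma ha_seq : ∀ k : ℕ, pc (14 * 2 ^ k + 2) ≤ 46 * 2 ^ k := by
  intro k
  induction k with
  | zero => simpa using pc16
  | succ k ih =>
      have hup := pc_even_upper (14 * 2 ^ k + 1)
      have e : 2 * (14 * 2 ^ k + 1) = 14 * 2 ^ (k + 1) + 2 := by ring
      rw [e] at hup
      have hmono : pc (14 * 2 ^ k + 1) ≤ pc (14 * 2 ^ k + 1 + 1) := pc_mono _
      have e2 : 14 * 2 ^ k + 1 + 1 = 14 * 2 ^ k + 2 := by ring
      rw [e2] at hup hmono
      calc pc (14 * 2 ^ (k + 1) + 2) ≤ pc (14 * 2 ^ k + 1) + pc (14 * 2 ^ k + 2) := hup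
        _ ≤ 2 * pc (14 * 2 ^ k + 2) := by omega
        _ ≤ 2 * (46 * 2 ^ k) := by omega
        _ = 46 * 2 ^ (k + 1) := by ring

/-- The first difference sequence `(p_t(n+1) − p_t(n))_{n ≥ 1}` of the subword
complexity of the Thue–Morse word is not ultimately periodic. -/
theorem thueMorse_complexity_first_differences_not_ultimately_periodic :
    ¬ ∃ (N P : ℕ), 1 ≤ P ∧ ∀ n : ℕ, 1 ≤ n → N ≤ n →
      (complexity thueMorse (n + P + 1) : ℤ) - complexity thueMorse (n + P)
        = (complexity thueMorse (n + 1) : ℤ) - complexity thueMorse n := by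
  rintro ⟨N, P, hP, hper⟩
  simp only [complexity_eq] at hper
  set N' : ℕ := max N 1 with hN'
  have hN1 : 1 ≤ N' := le_max_right N 1
  have hper' : ∀ n : ℕ, N' ≤ n →
      (pc (n + P + 1) : ℤ) - pc (n + P) = (pc (n + 1) : ℤ) - pc n := fun n hn =>
    hper n (le_trans (le_max_right N 1) hn) (le_trans (le_max_left N 1) hn)
  set L : ℤ := (pc (N' + P) : ℤ) - pc N' with hLdef
  have hL0 : 0 ≤ L := by
    have := pc_le_pc (show N' ≤ N' + P by omega)
    simp only [hLdef]
    omega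
  have hL : ∀ n : ℕ, N' ≤ n → (pc (n + P) : ℤ) = pc n + L := by
    intro n hn
    induction n, hn using Nat.le_induction with
    | base => simp only [hLdef]; ring
    | succ n hn ih =>
        have h1 := hper' n hn
        have e : n + 1 + P = n + P + 1 := by omega
        rw [e]
        omega
  have hiter : ∀ (k n : ℕ), N' ≤ n → (pc (n + k * P) : ℤ) = pc n + k * L := by
    intro k
    induction k with
    | zero => intro n hn; simp
    | succ k ih =>
        intro n hn
        have e : n + (k + 1) * P = n + k * P + P := by ring
        rw [e, hL (n + k * P) (by omega), ih n hn]
        push_cast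
        ring
  -- key bounds
  have key : ∀ n : ℕ, N' ≤ n →
      (P : ℤ) * pc N' + ((n : ℤ) - N' - P) * L ≤ (P : ℤ) * pc n ∧
      (P : ℤ) * pc n ≤ (P : ℤ) * pc (N' + P) + ((n : ℤ) - N') * L := by
    intro n hn
    obtain ⟨k, r, hrP, hn_eq⟩ : ∃ k r : ℕ, r < P ∧ n = N' + r + P * k := by
      refine ⟨(n - N') / P, (n - N') % P, Nat.mod_lt _ (by omega), ?_⟩
      have hdm := Nat.div_add_mod (n - N') P
      omega
    have hpn : (pc n : ℤ) = pc (N' + r) + k * L := by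
      have h := hiter k (N' + r) (by omega)
      rw [show N' + r + k * P = n from by rw [hn_eq]; ring] at h
      exact h
    have hkP : (P : ℤ) * k = (n : ℤ) - N' - r := by
      have hc : (n : ℤ) = (N' : ℤ) + r + P * k := by exact_mod_cast hn_eq
      linarith
    have hm1 : pc N' ≤ pc (N' + r) := pc_le_pc (by omega)
    have hm2 : pc (N' + r) ≤ pc (N' + P) := pc_le_pc (by omega)
    constructor
    · have hstep : ((n : ℤ) - N' - P) * L ≤ ((n : ℤ) - N' - r) * L := by
        apply mul_le_mul_of_nonneg_right _ hL0
        have : (r : ℤ) < P := by exact_mod_cast hrP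
        omega
      have heq : (P : ℤ) * pc n = P * pc (N' + r) + ((n : ℤ) - N' - r) * L := by
        linear_combination (P : ℤ) * hpn + L * hkP
      rw [heq]
      have : (P : ℤ) * pc N' ≤ P * pc (N' + r) := by
        apply mul_le_mul_of_nonneg_left _ (by positivity)
        exact_mod_cast hm1
      linarith
    · have hstep : ((n : ℤ) - N' - r) * L ≤ ((n : ℤ) - N') * L := by
        apply mul_le_mul_of_nonneg_right _ hL0
        have : (0 : ℤ) ≤ r := by positivity
        omega
      have heq : (P : ℤ) * pc n = P * pc (N' + r) + ((n : ℤ) - N' - r) * L := by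
        linear_combination (P : ℤ) * hpn + L * hkP
      rw [heq]
      have : (P : ℤ) * pc (N' + r) ≤ P * pc (N' + P) := by
        apply mul_le_mul_of_nonneg_left _ (by positivity)
        exact_mod_cast hm2
      linarith
  -- Claim 1 : 10 P ≤ 3 L
  have claim1 : 10 * (P : ℤ) ≤ 3 * L := by
    by_contra hcon
    push_neg at hcon
    set C1 : ℤ := (P : ℤ) * pc (N' + P) + L with hC1
    set k : ℕ := C1.toNat + N' + 1 with hk
    have hkpow : (k : ℤ) < 2 ^ k := by exact_mod_cast (Nat.lt_two_pow_self (n := k))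
    have hNk : N' ≤ 2 ^ k := by
      have : k < 2 ^ k := (Nat.lt_two_pow_self (n := k))
      omega
    set n : ℕ := 3 * 2 ^ k + 1 with hn
    have hnN : N' ≤ n := by omega
    have hupper := (key n hnN).2
    have hpb : (10 : ℤ) * 2 ^ k ≤ pc n := by exact_mod_cast hb_seq k
    have hP0 : (0 : ℤ) < P := by exact_mod_cast hP
    have h1 : (P : ℤ) * (10 * 2 ^ k) ≤ P * pc n :=
      mul_le_mul_of_nonneg_left hpb (by positivity)
    have h2 : ((n : ℤ) - N') * L ≤ (3 * 2 ^ k) * L := by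
      apply mul_le_mul_of_nonneg_right _ hL0
      have : (1 : ℤ) ≤ N' := by exact_mod_cast hN1
      have : (n : ℤ) = 3 * 2 ^ k + 1 := by exact_mod_cast rfl
      omega
    -- combine : 2^k * (10 P - 3 L) ≤ P * pc (N' + P)
    have h3 : (2 : ℤ) ^ k * (10 * P - 3 * L) ≤ (P : ℤ) * pc (N' + P) := by nlinarith
    have hX : (1 : ℤ) ≤ 10 * P - 3 * L := by omega
    have h4 : (2 : ℤ) ^ k ≤ 2 ^ k * (10 * P - 3 * L) :=
      le_mul_of_one_le_right (by positivity) hX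
    have h5 : C1 < (k : ℤ) := by
      have := Int.self_le_toNat C1
      have : (C1.toNat : ℤ) ≤ (k : ℤ) - N' - 1 := by
        simp only [hk]; push_cast; omega
      omega
    have hL_le : L ≤ C1 := by
      have hpc0 : (0 : ℤ) ≤ (P : ℤ) * pc (N' + P) := by positivity
      omega
    have : (P : ℤ) * pc (N' + P) ≤ C1 := by omega
    linarith
  -- Claim 2 : 14 L ≤ 46 P
  have claim2 : 14 * L ≤ 46 * (P : ℤ) := by
    by_contra hcon
    push_neg at hcon
    set C2 : ℤ := ((N' : ℤ) + P) * L with hC2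
    set k : ℕ := C2.toNat + N' + 1 with hk
    have hkpow : (k : ℤ) < 2 ^ k := by exact_mod_cast (Nat.lt_two_pow_self (n := k))
    have hNk : N' ≤ 2 ^ k := by
      have : k < 2 ^ k := (Nat.lt_two_pow_self (n := k))
      omega
    set n : ℕ := 14 * 2 ^ k + 2 with hn
    have hnN : N' ≤ n := by omega
    have hlower := (key n hnN).1
    have hpa : (pc n : ℤ) ≤ 46 * 2 ^ k := by exact_mod_cast ha_seq k
    have hP0 : (0 : ℤ) < P := by exact_mod_cast hP
    have h1 : (P : ℤ) * pc n ≤ P * (46 * 2 ^ k) :=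
      mul_le_mul_of_nonneg_left hpa (by positivity)
    have h2 : (14 * (2:ℤ) ^ k - ((N':ℤ) + P)) * L ≤ ((n : ℤ) - N' - P) * L := by
      apply mul_le_mul_of_nonneg_right _ hL0
      have : (n : ℤ) = 14 * 2 ^ k + 2 := by exact_mod_cast rfl
      omega
    have hpcN0 : (0 : ℤ) ≤ (P : ℤ) * pc N' := by positivity
    -- combine : 2^k * (14 L - 46 P) ≤ C2
    have h3 : (2 : ℤ) ^ k * (14 * L - 46 * P) ≤ C2 := by nlinarith
    have hX : (1 : ℤ) ≤ 14 * L - 46 * P := by omega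
    have h4 : (2 : ℤ) ^ k ≤ 2 ^ k * (14 * L - 46 * P) :=
      le_mul_of_one_le_right (by positivity) hX
    have h5 : C2 < (k : ℤ) := by
      have := Int.self_le_toNat C2
      have : (C2.toNat : ℤ) ≤ (k : ℤ) - N' - 1 := by
        simp only [hk]; push_cast; omega
      omega
    linarith
  have hPle : (1 : ℤ) ≤ P := by exact_mod_cast hP
  omega
end

section
/- For every integer k ≥ 2, the first difference sequence (p_{t_k}(n+1) − p_{t_k}(n))_{n≥1} of the subword complexity function of the generalized Thue–Morse word t_k is bounded and is not ultimately periodic. -/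
/-- The generalized Thue–Morse word: `t_k(n) = s₂(n) mod k`, where `s₂(n)` is the
sum of the binary digits of `n`. -/
def genThueMorse (k : ℕ) (n : ℕ) : ℕ := (Nat.digits 2 n).sum % k

/-- 2-adic valuation, custom. -/
def nu : ℕ → ℕ := fun n =>
  if h : n % 2 = 1 ∨ n = 0 then 0 else nu (n / 2) + 1
decreasing_by
  push_neg at h
  exact Nat.div_lt_self (Nat.pos_of_ne_zero h.2) one_lt_two

lemma nu_odd {n : ℕ} (h : n % 2 = 1) : nu n = 0 := by rw [nu]; simp [h]

lemma nu_two_mul {m : ℕ} (h : m ≠ 0) : nu (2 * m) = nu m + 1 := by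
  rw [nu]
  have h2 : ¬ (2 * m % 2 = 1 ∨ 2 * m = 0) := by omega
  simp only [h2, dite_false, Nat.mul_div_cancel_left m (by norm_num : 0 < 2)]

lemma nu_pow (e : ℕ) : nu (2 ^ e) = e := by
  induction e with
  | zero => exact nu_odd (by norm_num)
  | succ e ih => rw [pow_succ, mul_comm, nu_two_mul (by positivity), ih]

lemma nu_pos_of_even {m : ℕ} (h : m ≠ 0) (he : m % 2 = 0) : 1 ≤ nu m := by
  obtain ⟨y, rfl⟩ : ∃ y, m = 2 * y := ⟨m / 2, by omega⟩
  rw [nu_two_mul (by omega)]; omega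

lemma two_pow_nu_dvd {m : ℕ} (h : m ≠ 0) : 2 ^ (nu m) ∣ m := by
  induction m using Nat.strong_induction_on with
  | _ m ih =>
    rcases Nat.mod_two_eq_zero_or_one m with he | ho
    · obtain ⟨y, rfl⟩ : ∃ y, m = 2 * y := ⟨m / 2, by omega⟩
      have hy : y ≠ 0 := by omega
      rw [nu_two_mul hy, pow_succ, mul_comm (2 ^ nu y) 2]
      exact mul_dvd_mul_left 2 (ih y (by omega) hy)
    · rw [nu_odd ho]; simp

/-- ν₂ is unchanged by adding a power of 2 above the number. -/
lemma nu_add_pow {x L : ℕ} (hx : 0 < x) (hxL : x < 2 ^ L) : nu (x + 2 ^ L) = nu x := by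
  induction L generalizing x with
  | zero => omega
  | succ L ih =>
    have hps : (2:ℕ) ^ (L+1) = 2 ^ L * 2 := pow_succ 2 L
    rcases Nat.mod_two_eq_zero_or_one x with he | ho
    · obtain ⟨y, rfl⟩ : ∃ y, x = 2 * y := ⟨x / 2, by omega⟩
      have h2 : 2 * y + 2 ^ (L+1) = 2 * (y + 2 ^ L) := by omega
      rw [h2, nu_two_mul (by positivity), nu_two_mul (by omega), ih (by omega) (by omega)]
    · have h1 : (x + 2 ^ (L+1)) % 2 = 1 := by omega
      rw [nu_odd h1, nu_odd ho]

/-- digit sum base 2 -/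
def S2 (n : ℕ) : ℕ := (Nat.digits 2 n).sum

lemma S2_rec {n : ℕ} (h : 0 < n) : S2 n = n % 2 + S2 (n / 2) := by
  unfold S2
  rw [Nat.digits_def' (by norm_num : 1 < 2) h, List.sum_cons]

lemma S2_pow (e : ℕ) : S2 (2 ^ e) = 1 := by
  induction e with
  | zero => simp [S2]
  | succ e ih =>
    have hps : (2:ℕ) ^ (e+1) = 2 ^ e * 2 := pow_succ 2 e
    rw [S2_rec (by positivity)]
    have h1 : 2 ^ (e+1) % 2 = 0 := by omega
    have h2 : 2 ^ (e+1) / 2 = 2 ^ e := by omega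
    rw [h1, h2, ih]

lemma S2_add_pow {x L : ℕ} (hxL : x < 2 ^ L) : S2 (x + 2 ^ L) = S2 x + 1 := by
  induction L generalizing x with
  | zero =>
    interval_cases x
    simp [S2]
  | succ L ih =>
    rcases Nat.eq_zero_or_pos x with rfl | hx
    · rw [Nat.zero_add, S2_pow]; simp [S2]
    have hps : (2:ℕ) ^ (L+1) = 2 ^ L * 2 := pow_succ 2 L
    rw [S2_rec (by positivity), S2_rec hx]
    have hm : (x + 2 ^ (L+1)) % 2 = x % 2 := by omega
    have hd : (x + 2 ^ (L+1)) / 2 = x / 2 + 2 ^ L := by omega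
    rw [hm, hd, ih (by omega)]
    ring

/-- `S2 (n+1) + ν₂(n+1) = S2 n + 1`. -/
lemma S2_succ (n : ℕ) : S2 (n + 1) + nu (n + 1) = S2 n + 1 := by
  induction n using Nat.strong_induction_on with
  | _ n ih =>
    rcases Nat.mod_two_eq_zero_or_one n with he | ho
    · rw [nu_odd (by omega)]
      rcases Nat.eq_zero_or_pos n with rfl | hn
      · simp [S2]
      rw [S2_rec (by omega : 0 < n + 1), S2_rec hn]
      have h1 : (n+1) % 2 = 1 := by omega
      have h2 : (n+1) / 2 = n / 2 := by omega
      rw [h1, h2, he]; omega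
    · obtain ⟨m, rfl⟩ : ∃ m, n = 2 * m + 1 := ⟨n / 2, by omega⟩
      have h1 : 2 * m + 1 + 1 = 2 * (m + 1) := by ring
      rw [h1, nu_two_mul (by omega), S2_rec (by omega : 0 < 2 * (m+1)),
        S2_rec (by omega : 0 < 2 * m + 1)]
      have h2 : 2 * (m+1) % 2 = 0 := by omega
      have h3 : 2 * (m+1) / 2 = m + 1 := by omega
      have h4 : (2 * m + 1) % 2 = 1 := by omega
      have h5 : (2 * m + 1) / 2 = m := by omega
      rw [h2, h3, h4, h5]
      have := ih m (by omega)
      omega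

/-- `A r L = 2^L + 2^(L+1) + ... + 2^(L+r-1)`. -/
def Apow : ℕ → ℕ → ℕ
  | 0, _ => 0
  | r + 1, L => 2 ^ L + Apow r (L + 1)

lemma nu_add_Apow {r : ℕ} : ∀ {x L : ℕ}, 0 < x → x < 2 ^ L → nu (x + Apow r L) = nu x := by
  induction r with
  | zero => intro x L _ _; simp [Apow]
  | succ r ih =>
    intro x L hx hxL
    have h1 : x + Apow (r+1) L = (x + 2 ^ L) + Apow r (L+1) := by simp [Apow]; ring
    have h2 : x + 2 ^ L < 2 ^ (L+1) := by
      have : (2:ℕ) ^ (L+1) = 2 ^ L * 2 := pow_succ 2 L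
      omega
    rw [h1, ih (by omega) h2, nu_add_pow hx hxL]

lemma S2_add_Apow {r : ℕ} : ∀ {x L : ℕ}, x < 2 ^ L → S2 (x + Apow r L) = S2 x + r := by
  induction r with
  | zero => intro x L _; simp [Apow]
  | succ r ih =>
    intro x L hxL
    have h1 : x + Apow (r+1) L = (x + 2 ^ L) + Apow r (L+1) := by simp [Apow]; ring
    have h2 : x + 2 ^ L < 2 ^ (L+1) := by
      have : (2:ℕ) ^ (L+1) = 2 ^ L * 2 := pow_succ 2 L
      omega
    rw [h1, ih h2, S2_add_pow hxL]
    omega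

section K
variable {k : ℕ} (hk : 2 ≤ k)

/-- the `V` word: `V k m = ν₂(m+1) mod k`. -/
def Vword (k : ℕ) (m : ℕ) : ℕ := nu (m + 1) % k

lemma T_succ {k : ℕ} (i : ℕ) :
    ((S2 (i+1) : ZMod k)) = (S2 i : ZMod k) + 1 - (nu (i+1) : ZMod k) := by
  have := S2_succ i
  have : ((S2 (i+1) + nu (i+1) : ℕ) : ZMod k) = ((S2 i + 1 : ℕ) : ZMod k) := by rw [this]
  push_cast at this
  linear_combination this

end K

lemma exists_witness (k : ℕ) [NeZero k] (c : ZMod k) (i N : ℕ) :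
    ∃ W : ℕ, (S2 W : ZMod k) = c ∧ ∀ j, j < N → nu (W + j + 1) = nu (i + j + 1) := by
  set L := i + N with hL
  have hpow : i + N < 2 ^ L := Nat.lt_two_pow_self
  set r := (c - (S2 i : ZMod k)).val with hr
  refine ⟨i + Apow r L, ?_, ?_⟩
  · rw [S2_add_Apow (by omega : i < 2 ^ L)]
    push_cast
    rw [hr, ZMod.natCast_val, ZMod.cast_id]
    ring
  · intro j hj
    have h1 : i + Apow r L + j + 1 = (i + j + 1) + Apow r L := by ring
    rw [h1, nu_add_Apow (by omega) (by omega)]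

section K
variable {k : ℕ} (hk : 2 ≤ k)

include hk in
lemma gtm_cast (x : ℕ) : ((genThueMorse k x : ℕ) : ZMod k) = (S2 x : ZMod k) := by
  show (((Nat.digits 2 x).sum % k : ℕ) : ZMod k) = _
  rw [ZMod.natCast_mod]
  rfl

include hk in
lemma gtm_lt (x : ℕ) : genThueMorse k x < k :=
  Nat.mod_lt _ (by omega)

include hk in
lemma gtm_eq_val (x : ℕ) : genThueMorse k x = (S2 x : ZMod k).val := by
  rw [ZMod.val_natCast]; rfl

include hk in
/-- Key Lemma A : `p_t(N+1) = k * p_V(N)`. -/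
lemma complexity_tm (N : ℕ) :
    complexity (genThueMorse k) (N + 1) = k * complexity (Vword k) N := by
  haveI : NeZero k := ⟨by omega⟩
  classical
  set A := {f : Fin (N+1) → ℕ | ∃ i : ℕ, ∀ j : Fin (N+1), f j = genThueMorse k (i + j)} with hA
  set B := {g : Fin N → ℕ | ∃ i : ℕ, ∀ j : Fin N, g j = Vword k (i + j)} with hB
  obtain ⟨Wit, hW1, hW2⟩ :
      ∃ Wit : ZMod k → ℕ → ℕ, (∀ c i, (S2 (Wit c i) : ZMod k) = c) ∧
        (∀ c i j, j < N → nu (Wit c i + j + 1) = nu (i + j + 1)) := by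
    choose Wit h1 h2 using fun (c : ZMod k) (i : ℕ) => exists_witness k c i N
    exact ⟨Wit, h1, h2⟩
  -- the bijection
  let Φ : Fin k × B → ↥A := fun p =>
    ⟨fun j => genThueMorse k (Wit ((p.1 : ℕ) : ZMod k) p.2.2.choose + j),
     ⟨Wit ((p.1 : ℕ) : ZMod k) p.2.2.choose, fun _ => rfl⟩⟩
  -- first letter of the produced word
  have letter0 : ∀ (c : Fin k) (i : ℕ),
      genThueMorse k (Wit ((c : ℕ) : ZMod k) i + 0) = (c : ℕ) := by
    intro c i
    rw [gtm_eq_val hk, Nat.add_zero, hW1, ZMod.val_natCast, Nat.mod_eq_of_lt c.isLt]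
  -- recovery of the V-letters from the produced word
  have grec : ∀ (c : ZMod k) (i : ℕ) (m : ℕ), m < N →
      Vword k (i + m) = ((genThueMorse k (Wit c i + m) : ZMod k) + 1
        - (genThueMorse k (Wit c i + (m+1)) : ZMod k)).val := by
    intro c i m hm
    have h2 : ((genThueMorse k (Wit c i + m) : ℕ) : ZMod k) + 1
        - ((genThueMorse k (Wit c i + (m+1)) : ℕ) : ZMod k) = (nu (Wit c i + m + 1) : ZMod k) := by
      rw [gtm_cast hk, gtm_cast hk]
      have ht := T_succ (k := k) (Wit c i + m)
      rw [show Wit c i + m + 1 = Wit c i + (m+1) from rfl] at ht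
      rw [ht]
      ring
    rw [h2, hW2 c i m hm]
    show nu (i + m + 1) % k = _
    rw [ZMod.val_natCast]
  have hbij : Function.Bijective Φ := by
    constructor
    · rintro ⟨c, g, hg⟩ ⟨c', g', hg'⟩ hpq
      have hfun : ∀ m : ℕ, m < N + 1 →
          genThueMorse k (Wit ((c:ℕ):ZMod k) hg.choose + m)
            = genThueMorse k (Wit ((c':ℕ):ZMod k) hg'.choose + m) := by
        intro m hm
        exact congrFun (congrArg Subtype.val hpq) ⟨m, hm⟩
      have hc : c = c' := by
        have h0 := hfun 0 (by omega)
        rw [letter0, letter0] at h0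
        exact Fin.ext h0
      have hgg : g = g' := by
        funext j
        have e1 : g j = Vword k (hg.choose + j) := hg.choose_spec j
        have e2 : g' j = Vword k (hg'.choose + j) := hg'.choose_spec j
        rw [e1, e2, grec ((c:ℕ):ZMod k) hg.choose j j.isLt,
          grec ((c':ℕ):ZMod k) hg'.choose j j.isLt,
          hfun j (Nat.lt_succ_of_lt j.isLt), hfun (j+1) (Nat.succ_lt_succ j.isLt)]
      subst hc; subst hgg; rfl
    · rintro ⟨f, hf⟩
      have hf0 : ∀ j : Fin (N+1), f j = genThueMorse k (hf.choose + j) := hf.choose_spec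
      set i0 := hf.choose with hi0
      have hflt : f 0 < k := by rw [hf0 0]; exact gtm_lt hk _
      set g : Fin N → ℕ := fun j => Vword k (i0 + j) with hgdef
      have hgB : g ∈ B := ⟨i0, fun j => rfl⟩
      refine ⟨(⟨f 0, hflt⟩, ⟨g, hgB⟩), ?_⟩
      set i1 := (⟨g, hgB⟩ : ↥B).2.choose with hi1
      have hgi1 : ∀ j : Fin N, g j = Vword k (i1 + j) := (⟨g, hgB⟩ : ↥B).2.choose_spec
      set W := Wit ((f 0 : ℕ) : ZMod k) i1 with hWdef
      -- casts of nu agree between W-positions and i0-positions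
      have hnu : ∀ m, m < N → ((nu (W + m + 1) : ℕ) : ZMod k) = ((nu (i0 + m + 1) : ℕ) : ZMod k) := by
        intro m hm
        rw [hWdef, hW2 _ _ m hm]
        have hv : Vword k (i1 + m) = Vword k (i0 + m) := by
          have h5 := hgi1 ⟨m, hm⟩
          simp only [hgdef, Fin.val_mk] at h5
          exact h5.symm
        calc ((nu (i1 + m + 1) : ℕ) : ZMod k)
            = ((nu (i1 + m + 1) % k : ℕ) : ZMod k) := (ZMod.natCast_mod _ _).symm
          _ = ((nu (i0 + m + 1) % k : ℕ) : ZMod k) := by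
              show ((Vword k (i1 + m) : ℕ) : ZMod k) = ((Vword k (i0 + m) : ℕ) : ZMod k)
              rw [hv]
          _ = ((nu (i0 + m + 1) : ℕ) : ZMod k) := ZMod.natCast_mod _ _
      -- main induction on position
      have main : ∀ m (hm : m < N + 1), genThueMorse k (W + m) = f ⟨m, hm⟩ := by
        intro m
        induction m with
        | zero =>
          intro hm
          have l0 := letter0 ⟨f 0, hflt⟩ i1
          simp only [Fin.val_mk] at l0
          rw [← hWdef] at l0
          rw [l0]
          exact (congrArg f (Fin.ext (by simp))).symm
        | succ m ih =>
          intro hm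
          have hmN : m < N := by omega
          have e1 : f ⟨m, by omega⟩ = genThueMorse k (i0 + m) := by
            have h6 := hf0 ⟨m, by omega⟩
            simpa using h6
          have ihm2 : genThueMorse k (W + m) = genThueMorse k (i0 + m) :=
            (ih (by omega)).trans e1
          have hcast : (S2 (W + m) : ZMod k) = (S2 (i0 + m) : ZMod k) := by
            rw [← gtm_cast hk (W + m), ← gtm_cast hk (i0 + m), ihm2]
          have hS : (S2 (W + (m+1)) : ZMod k) = (S2 (i0 + (m+1)) : ZMod k) := by
            have t1 := T_succ (k := k) (W + m)
            have t2 := T_succ (k := k) (i0 + m)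
            rw [show W + m + 1 = W + (m+1) from rfl] at t1
            rw [show i0 + m + 1 = i0 + (m+1) from rfl] at t2
            have hnum := hnu m hmN
            rw [show W + m + 1 = W + (m+1) from rfl,
              show i0 + m + 1 = i0 + (m+1) from rfl] at hnum
            rw [t1, t2, hcast, hnum]
          have e2 : f ⟨m+1, hm⟩ = genThueMorse k (i0 + (m+1)) := by
            have h7 := hf0 ⟨m+1, hm⟩
            simpa using h7
          rw [e2, gtm_eq_val hk, gtm_eq_val hk, hS]
      apply Subtype.ext
      funext j
      show genThueMorse k (W + (j : ℕ)) = f j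
      have h8 := main j j.isLt
      rwa [show (⟨(j:ℕ), j.isLt⟩ : Fin (N+1)) = j from Fin.ext rfl] at h8
  calc complexity (genThueMorse k) (N+1) = Nat.card ↥A := (Nat.card_coe_set_eq A).symm
    _ = Nat.card (Fin k × ↥B) := Nat.card_congr (Equiv.ofBijective Φ hbij).symm
    _ = k * Nat.card ↥B := by rw [Nat.card_prod, Nat.card_eq_fintype_card, Fintype.card_fin]
    _ = k * complexity (Vword k) N := by rw [Nat.card_coe_set_eq]; rfl


end K

section K2
variable {k : ℕ}

lemma Vword_lt (hk : 2 ≤ k) (m : ℕ) : Vword k m < k := Nat.mod_lt _ (by omega)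

lemma Vword_zero {m : ℕ} (h : m % 2 = 0) : Vword k m = 0 := by
  rw [Vword, nu_odd (by omega), Nat.zero_mod]

lemma Vword_pow_sub_one (hk : 2 ≤ k) (c : ℕ) (hc : c < k) :
    Vword k (2 ^ (c + k) - 1) = c := by
  have hp : 1 ≤ 2 ^ (c + k) := Nat.one_le_two_pow
  rw [Vword, show 2 ^ (c + k) - 1 + 1 = 2 ^ (c + k) from by omega, nu_pow,
    Nat.add_mod_right, Nat.mod_eq_of_lt hc]

lemma complexity_zero (w : ℕ → ℕ) : complexity w 0 = 1 := by
  have huniv : {f : Fin 0 → ℕ | ∃ i : ℕ, ∀ j : Fin 0, f j = w (i + j)} = Set.univ := by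
    apply Set.eq_univ_of_forall
    intro f
    exact ⟨0, fun j => j.elim0⟩
  show Set.ncard _ = 1
  rw [huniv, Set.ncard_univ]
  haveI : Unique (Fin 0 → ℕ) := ⟨⟨fun j => j.elim0⟩, fun f => funext fun j => j.elim0⟩
  exact Nat.card_unique

lemma complexity_V_one (hk : 2 ≤ k) : complexity (Vword k) 1 = k := by
  classical
  have hset : {f : Fin 1 → ℕ | ∃ i : ℕ, ∀ j : Fin 1, f j = Vword k (i + j)}
      = (fun c : Fin k => fun _ : Fin 1 => (c : ℕ)) '' Set.univ := by
    apply Set.Subset.antisymm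
    · rintro f ⟨i, hf⟩
      have h0 : f 0 = Vword k (i + 0) := by
        have := hf 0; simpa using this
      refine ⟨⟨f 0, by rw [h0]; exact Vword_lt hk _⟩, Set.mem_univ _, ?_⟩
      funext j
      have hj : j = 0 := Subsingleton.elim j 0
      rw [hj]
    · rintro f ⟨c, _, rfl⟩
      refine ⟨2 ^ ((c : ℕ) + k) - 1, fun j => ?_⟩
      have hj : (j : ℕ) = 0 := by omega
      rw [hj, Nat.add_zero, Vword_pow_sub_one hk _ c.isLt]
  show Set.ncard _ = k
  rw [hset, Set.ncard_image_of_injOn, Set.ncard_univ, Nat.card_eq_fintype_card,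
    Fintype.card_fin]
  intro c _ c' _ h
  have := congrFun h 0
  exact Fin.ext this

lemma complexity_V_two (hk : 2 ≤ k) : complexity (Vword k) 2 + 1 = 2 * k := by
  classical
  set T1 : Set (Fin 2 → ℕ) :=
    (fun c : Fin k => fun j : Fin 2 => if (j : ℕ) = 1 then (c : ℕ) else 0) '' Set.univ with hT1
  set T2 : Set (Fin 2 → ℕ) :=
    (fun c : Fin k => fun j : Fin 2 => if (j : ℕ) = 0 then (c : ℕ) else 0) '' Set.univ with hT2
  have fin2 : ∀ j : Fin 2, j = 0 ∨ j = 1 := by decide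
  have hset : {f : Fin 2 → ℕ | ∃ i : ℕ, ∀ j : Fin 2, f j = Vword k (i + j)} = T1 ∪ T2 := by
    apply Set.Subset.antisymm
    · rintro f ⟨i, hf⟩
      have h0 := hf 0
      have h1 := hf 1
      simp only [Fin.val_zero, Fin.val_one, Nat.add_zero] at h0 h1
      rcases Nat.mod_two_eq_zero_or_one i with hpar | hpar
      · refine Or.inl ⟨⟨f 1, by rw [h1]; exact Vword_lt hk _⟩, Set.mem_univ _, ?_⟩
        funext j
        rcases fin2 j with rfl | rfl
        · have : (0:ℕ) = f 0 := by rw [h0, Vword_zero hpar]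
          simpa using this
        · simpa using rfl
      · refine Or.inr ⟨⟨f 0, by rw [h0]; exact Vword_lt hk _⟩, Set.mem_univ _, ?_⟩
        funext j
        rcases fin2 j with rfl | rfl
        · simpa using rfl
        · have : (0:ℕ) = f 1 := by rw [h1, Vword_zero (by omega : (i+1) % 2 = 0)]
          simpa using this
    · rintro f (⟨c, _, rfl⟩ | ⟨c, _, rfl⟩)
      · -- start even : i = 2^(c+k) - 2
        have hps : 2 ^ ((c : ℕ) + k) = 2 ^ ((c : ℕ) + k - 1) * 2 := by
          rw [← pow_succ]
          congr 1
          omega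
        have hp1 : 1 ≤ 2 ^ ((c : ℕ) + k - 1) := Nat.one_le_two_pow
        refine ⟨2 ^ ((c : ℕ) + k) - 2, fun j => ?_⟩
        rcases fin2 j with rfl | rfl
        · have : (0:ℕ) = Vword k (2 ^ ((c : ℕ) + k) - 2) :=
            (Vword_zero (by omega)).symm
          simpa using this
        · have : (c:ℕ) = Vword k (2 ^ ((c : ℕ) + k) - 2 + 1) := by
            rw [show 2 ^ ((c : ℕ) + k) - 2 + 1 = 2 ^ ((c : ℕ) + k) - 1 from by omega,
              Vword_pow_sub_one hk _ c.isLt]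
          simpa using this
      · -- start odd : i = 2^(c+k) - 1
        have hps : 2 ^ ((c : ℕ) + k) = 2 ^ ((c : ℕ) + k - 1) * 2 := by
          rw [← pow_succ]
          congr 1
          omega
        have hp1 : 1 ≤ 2 ^ ((c : ℕ) + k - 1) := Nat.one_le_two_pow
        refine ⟨2 ^ ((c : ℕ) + k) - 1, fun j => ?_⟩
        rcases fin2 j with rfl | rfl
        · have : (c:ℕ) = Vword k (2 ^ ((c : ℕ) + k) - 1) :=
            (Vword_pow_sub_one hk _ c.isLt).symm
          simpa using this
        · have : (0:ℕ) = Vword k (2 ^ ((c : ℕ) + k) - 1 + 1) :=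
            (Vword_zero (by omega)).symm
          simpa using this
  have hinj1 : Set.InjOn (fun c : Fin k => fun j : Fin 2 => if (j : ℕ) = 1 then (c : ℕ) else 0)
      Set.univ := by
    intro c _ c' _ h
    have := congrFun h 1
    simp only [Fin.val_one, if_pos rfl] at this
    exact Fin.ext this
  have hinj2 : Set.InjOn (fun c : Fin k => fun j : Fin 2 => if (j : ℕ) = 0 then (c : ℕ) else 0)
      Set.univ := by
    intro c _ c' _ h
    have := congrFun h 0
    simp only [Fin.val_zero, if_pos rfl] at this
    exact Fin.ext this
  have hcard1 : T1.ncard = k := by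
    rw [hT1, Set.ncard_image_of_injOn hinj1, Set.ncard_univ, Nat.card_eq_fintype_card,
      Fintype.card_fin]
  have hcard2 : T2.ncard = k := by
    rw [hT2, Set.ncard_image_of_injOn hinj2, Set.ncard_univ, Nat.card_eq_fintype_card,
      Fintype.card_fin]
  have hfin1 : T1.Finite := Set.Finite.image _ Set.finite_univ
  have hfin2 : T2.Finite := Set.Finite.image _ Set.finite_univ
  have hinter : T1 ∩ T2 = {fun _ => 0} := by
    apply Set.Subset.antisymm
    · rintro f ⟨⟨c, _, hc⟩, ⟨c', _, hc'⟩⟩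
      have e0 : f 0 = 0 := by rw [← hc]; simp
      have e1 : f 1 = 0 := by rw [← hc']; simp
      have : f = fun _ => 0 := by
        funext j
        rcases fin2 j with rfl | rfl
        · exact e0
        · exact e1
      simp [this]
    · rintro f hf
      simp only [Set.mem_singleton_iff] at hf
      subst hf
      constructor
      · exact ⟨⟨0, by omega⟩, Set.mem_univ _, by funext j; simp⟩
      · exact ⟨⟨0, by omega⟩, Set.mem_univ _, by funext j; simp⟩
  have hkey := Set.ncard_union_add_ncard_inter T1 T2 hfin1 hfin2
  rw [hcard1, hcard2, hinter, Set.ncard_singleton] at hkey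
  show Set.ncard _ + 1 = 2 * k
  rw [hset, hkey]
  ring

lemma Vword_double (z : ℕ) : Vword k (2 * z + 1) = (Vword k z + 1) % k := by
  rw [Vword, Vword, show 2 * z + 1 + 1 = 2 * (z + 1) from by ring, nu_two_mul (by omega),
    Nat.mod_add_mod]

/-- recovery arithmetic -/
lemma unshift (hk : 2 ≤ k) {V : ℕ} (hV : V < k) : ((V + 1) % k + (k - 1)) % k = V := by
  rw [Nat.mod_add_mod, show V + 1 + (k - 1) = V + k from by omega, Nat.add_mod_right,
    Nat.mod_eq_of_lt hV]

lemma reshift (hk : 2 ≤ k) (V : ℕ) : (V % k + 1) % k = (V + 1) % k := by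
  rw [Nat.mod_add_mod]

/-- factor sets are finite -/
lemma factorSet_finite (w : ℕ → ℕ) (hw : ∀ x, w x < k) (n : ℕ) :
    {f : Fin n → ℕ | ∃ i : ℕ, ∀ j : Fin n, f j = w (i + j)}.Finite := by
  apply Set.Finite.subset (Set.finite_range (fun (h : Fin n → Fin k) => fun j => (h j : ℕ)))
  rintro f ⟨i, hf⟩
  exact ⟨fun j => ⟨f j, (hf j) ▸ hw _⟩, rfl⟩

/-- Lemma B : the divide-and-conquer recurrence. -/
lemma complexity_V_rec (hk : 2 ≤ k) {n : ℕ} (hn : 3 ≤ n) :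
    complexity (Vword k) n = complexity (Vword k) ((n+1)/2) + complexity (Vword k) (n/2) := by
  classical
  set n1 := (n+1)/2 with hn1
  set n0 := n/2 with hn0
  set B : Set (Fin n → ℕ) := {f | ∃ i : ℕ, ∀ j : Fin n, f j = Vword k (i + j)} with hB
  set B1 : Set (Fin n1 → ℕ) := {g | ∃ i : ℕ, ∀ j : Fin n1, g j = Vword k (i + j)} with hB1
  set B0 : Set (Fin n0 → ℕ) := {g | ∃ i : ℕ, ∀ j : Fin n0, g j = Vword k (i + j)} with hB0
  set E : Set (Fin n → ℕ) := {f | ∃ i : ℕ, i % 2 = 1 ∧ ∀ j : Fin n, f j = Vword k (i + j)} with hE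
  set O : Set (Fin n → ℕ) := {f | ∃ i : ℕ, i % 2 = 0 ∧ ∀ j : Fin n, f j = Vword k (i + j)} with hO
  have hBfin : B.Finite := factorSet_finite _ (Vword_lt hk) n
  have hEB : E ⊆ B := by rintro f ⟨i, _, hf⟩; exact ⟨i, hf⟩
  have hOB : O ⊆ B := by rintro f ⟨i, _, hf⟩; exact ⟨i, hf⟩
  have hunion : B = E ∪ O := by
    apply Set.Subset.antisymm
    · rintro f ⟨i, hf⟩
      rcases Nat.mod_two_eq_zero_or_one i with h | h
      · exact Or.inr ⟨i, h, hf⟩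
      · exact Or.inl ⟨i, h, hf⟩
    · exact Set.union_subset hEB hOB
  have hdisj : Disjoint E O := by
    rw [Set.disjoint_left]
    rintro f ⟨i, hi, hf⟩ ⟨i', hi', hf'⟩
    have h0 : f ⟨0, by omega⟩ = 0 := by
      rw [hf' ⟨0, by omega⟩]; simp only [Fin.val_mk]; exact Vword_zero (by omega)
    have h2 : f ⟨2, by omega⟩ = 0 := by
      rw [hf' ⟨2, by omega⟩]; simp only [Fin.val_mk]; exact Vword_zero (by omega)
    rw [hf ⟨0, by omega⟩] at h0
    rw [hf ⟨2, by omega⟩] at h2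
    simp only [Fin.val_mk] at h0 h2
    rw [Nat.add_zero] at h0
    -- h0 : Vword k i = 0, i odd so i+1 even;  h2 : Vword k (i+2) = 0
    have hd1 : (4:ℕ) ∣ (i + 1) := by
      have e1 : 1 ≤ nu (i+1) := nu_pos_of_even (by omega) (by omega)
      have e2 : k ∣ nu (i+1) := by
        have : nu (i+1) % k = 0 := h0
        omega
      have e3 : 2 ≤ nu (i+1) := by
        rcases e2 with ⟨q, hq⟩
        have : q ≠ 0 := by rintro rfl; omega
        have : 1 ≤ q := by omega
        calc 2 ≤ k := hk
          _ ≤ k * q := by nlinarith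
          _ = nu (i+1) := hq.symm
      calc (4:ℕ) = 2 ^ 2 := by norm_num
        _ ∣ 2 ^ (nu (i+1)) := pow_dvd_pow 2 e3
        _ ∣ i + 1 := two_pow_nu_dvd (by omega)
    have hd2 : (4:ℕ) ∣ (i + 3) := by
      have e1 : 1 ≤ nu (i+3) := nu_pos_of_even (by omega) (by omega)
      have e2 : k ∣ nu (i+3) := by
        have : nu (i+2+1) % k = 0 := h2
        have h23 : i + 2 + 1 = i + 3 := by ring
        rw [h23] at this
        omega
      have e3 : 2 ≤ nu (i+3) := by
        rcases e2 with ⟨q, hq⟩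
        have : q ≠ 0 := by rintro rfl; omega
        have : 1 ≤ q := by omega
        calc 2 ≤ k := hk
          _ ≤ k * q := by nlinarith
          _ = nu (i+3) := hq.symm
      calc (4:ℕ) = 2 ^ 2 := by norm_num
        _ ∣ 2 ^ (nu (i+3)) := pow_dvd_pow 2 e3
        _ ∣ i + 3 := two_pow_nu_dvd (by omega)
    omega
  -- the even-start bijection
  have hj1 : ∀ j' : Fin n1, 2 * (j' : ℕ) < n := by intro j'; have := j'.isLt; omega
  set φ : (Fin n → ℕ) → (Fin n1 → ℕ) :=
    fun f j' => (f ⟨2 * (j' : ℕ), hj1 j'⟩ + (k - 1)) % k with hφ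
  have keyE : ∀ (i' : ℕ) (f : Fin n → ℕ), (∀ j : Fin n, f j = Vword k (2 * i' + 1 + j)) →
      ∀ j' : Fin n1, φ f j' = Vword k (i' + j') := by
    intro i' f hf j'
    rw [hφ]
    show (f ⟨2 * (j' : ℕ), hj1 j'⟩ + (k - 1)) % k = _
    rw [hf ⟨2 * (j' : ℕ), hj1 j'⟩]
    simp only [Fin.val_mk]
    rw [show 2 * i' + 1 + 2 * (j' : ℕ) = 2 * (i' + (j' : ℕ)) + 1 from by ring, Vword_double]
    exact unshift hk (Vword_lt hk _)
  have hEinj : Set.InjOn φ E := by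
    rintro f ⟨i, hi, hf⟩ f' ⟨i2, hi2, hf'⟩ heq
    obtain ⟨i', rfl⟩ : ∃ i', i = 2 * i' + 1 := ⟨i / 2, by omega⟩
    obtain ⟨i2', rfl⟩ : ∃ i2', i2 = 2 * i2' + 1 := ⟨i2 / 2, by omega⟩
    funext j
    rcases Nat.mod_two_eq_zero_or_one (j : ℕ) with hpar | hpar
    · -- even position : recover from φ
      obtain ⟨j'', hj''⟩ : ∃ j'', (j : ℕ) = 2 * j'' := ⟨(j : ℕ) / 2, by omega⟩
      have hj''lt : j'' < n1 := by have := j.isLt; omega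
      have c1 := congrFun heq ⟨j'', hj''lt⟩
      rw [keyE i' f hf ⟨j'', hj''lt⟩, keyE i2' f' hf' ⟨j'', hj''lt⟩] at c1
      have r1 : f j = (Vword k (i' + j'') + 1) % k := by
        rw [hf j, show (2 * i' + 1 + (j : ℕ)) = 2 * (i' + j'') + 1 from by omega, Vword_double]
      have r2 : f' j = (Vword k (i2' + j'') + 1) % k := by
        rw [hf' j, show (2 * i2' + 1 + (j : ℕ)) = 2 * (i2' + j'') + 1 from by omega, Vword_double]
      rw [r1, r2]
      simp only [Fin.val_mk] at c1
      rw [c1]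
    · -- odd position : both letters are 0
      rw [hf j, hf' j, Vword_zero (by omega), Vword_zero (by omega)]
  have hEim : φ '' E = B1 := by
    apply Set.Subset.antisymm
    · rintro g ⟨f, ⟨i, hi, hf⟩, rfl⟩
      obtain ⟨i', rfl⟩ : ∃ i', i = 2 * i' + 1 := ⟨i / 2, by omega⟩
      exact ⟨i', fun j' => keyE i' f hf j'⟩
    · rintro g ⟨i1, hg⟩
      refine ⟨fun j => Vword k (2 * i1 + 1 + j), ⟨2 * i1 + 1, by omega, fun j => rfl⟩, ?_⟩
      funext j'
      rw [keyE i1 _ (fun j => rfl) j', hg j']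
  have hEcard : E.ncard = complexity (Vword k) n1 := by
    have := Set.ncard_image_of_injOn hEinj
    rw [hEim] at this
    exact this.symm
  -- the odd-start bijection
  have hj0 : ∀ j' : Fin n0, 2 * (j' : ℕ) + 1 < n := by intro j'; have := j'.isLt; omega
  set ψ : (Fin n → ℕ) → (Fin n0 → ℕ) :=
    fun f j' => (f ⟨2 * (j' : ℕ) + 1, hj0 j'⟩ + (k - 1)) % k with hψ
  have keyO : ∀ (i' : ℕ) (f : Fin n → ℕ), (∀ j : Fin n, f j = Vword k (2 * i' + j)) →
      ∀ j' : Fin n0, ψ f j' = Vword k (i' + j') := by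
    intro i' f hf j'
    rw [hψ]
    show (f ⟨2 * (j' : ℕ) + 1, hj0 j'⟩ + (k - 1)) % k = _
    rw [hf ⟨2 * (j' : ℕ) + 1, hj0 j'⟩]
    simp only [Fin.val_mk]
    rw [show 2 * i' + (2 * (j' : ℕ) + 1) = 2 * (i' + (j' : ℕ)) + 1 from by ring, Vword_double]
    exact unshift hk (Vword_lt hk _)
  have hOinj : Set.InjOn ψ O := by
    rintro f ⟨i, hi, hf⟩ f' ⟨i2, hi2, hf'⟩ heq
    obtain ⟨i', rfl⟩ : ∃ i', i = 2 * i' := ⟨i / 2, by omega⟩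
    obtain ⟨i2', rfl⟩ : ∃ i2', i2 = 2 * i2' := ⟨i2 / 2, by omega⟩
    funext j
    rcases Nat.mod_two_eq_zero_or_one (j : ℕ) with hpar | hpar
    · rw [hf j, hf' j, Vword_zero (by omega), Vword_zero (by omega)]
    · obtain ⟨j'', hj''⟩ : ∃ j'', (j : ℕ) = 2 * j'' + 1 := ⟨(j : ℕ) / 2, by omega⟩
      have hj''lt : j'' < n0 := by have := j.isLt; omega
      have c1 := congrFun heq ⟨j'', hj''lt⟩
      rw [keyO i' f hf ⟨j'', hj''lt⟩, keyO i2' f' hf' ⟨j'', hj''lt⟩] at c1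
      have r1 : f j = (Vword k (i' + j'') + 1) % k := by
        rw [hf j, show (2 * i' + (j : ℕ)) = 2 * (i' + j'') + 1 from by omega, Vword_double]
      have r2 : f' j = (Vword k (i2' + j'') + 1) % k := by
        rw [hf' j, show (2 * i2' + (j : ℕ)) = 2 * (i2' + j'') + 1 from by omega, Vword_double]
      rw [r1, r2]
      simp only [Fin.val_mk] at c1
      rw [c1]
  have hOim : ψ '' O = B0 := by
    apply Set.Subset.antisymm
    · rintro g ⟨f, ⟨i, hi, hf⟩, rfl⟩
      obtain ⟨i', rfl⟩ : ∃ i', i = 2 * i' := ⟨i / 2, by omega⟩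
      exact ⟨i', fun j' => keyO i' f hf j'⟩
    · rintro g ⟨i1, hg⟩
      refine ⟨fun j => Vword k (2 * i1 + j), ⟨2 * i1, by omega, fun j => rfl⟩, ?_⟩
      funext j'
      rw [keyO i1 _ (fun j => rfl) j', hg j']
  have hOcard : O.ncard = complexity (Vword k) n0 := by
    have := Set.ncard_image_of_injOn hOinj
    rw [hOim] at this
    exact this.symm
  show B.ncard = complexity (Vword k) n1 + complexity (Vword k) n0
  rw [hunion, Set.ncard_union_eq hdisj (hBfin.subset hEB) (hBfin.subset hOB), hEcard, hOcard]

end K2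

section Arith
variable (k : ℕ) (pV : ℕ → ℕ)
variable (hk : 2 ≤ k)
variable (hp0 : pV 0 = 1) (hp1 : pV 1 = k) (hp2 : pV 2 + 1 = 2 * k)
variable (hrec : ∀ n, 3 ≤ n → pV n = pV ((n + 1) / 2) + pV (n / 2))

include hk hp1 hrec in
lemma DK : ∀ a, 1 ≤ a → ∀ n, 2 ^ a < n → n ≤ 3 * 2 ^ (a - 1) → pV n = pV (n - 1) + k := by
  intro a ha
  induction a, ha using Nat.le_induction with
  | base =>
    intro n h1 h2
    rw [show (2:ℕ) ^ 1 = 2 from by norm_num] at h1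
    rw [show (3 * 2 ^ (1 - 1) : ℕ) = 3 from by norm_num] at h2
    have hn3 : n = 3 := by omega
    subst hn3
    have := hrec 3 (by norm_num)
    norm_num at this
    rw [this, hp1]
  | succ a ha ih =>
    intro n h1 h2
    simp only [Nat.add_sub_cancel] at h1 h2
    have e1 : 2 ^ (a + 1) = 2 ^ a * 2 := pow_succ 2 a
    have e2 : 2 ^ a = 2 ^ (a - 1) * 2 := by rw [← pow_succ]; congr 1; omega
    have e3 : (2:ℕ) ^ (a - 1) ≥ 1 := Nat.one_le_two_pow
    have hn5 : 5 ≤ n := by omega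
    rcases Nat.mod_two_eq_zero_or_one n with hpar | hpar
    · obtain ⟨m, rfl⟩ : ∃ m, n = 2 * m := ⟨n / 2, by omega⟩
      have r1 := hrec (2 * m) (by omega)
      rw [show (2 * m + 1) / 2 = m from by omega, show 2 * m / 2 = m from by omega] at r1
      have r2 := hrec (2 * m - 1) (by omega)
      rw [show (2 * m - 1 + 1) / 2 = m from by omega,
        show (2 * m - 1) / 2 = m - 1 from by omega] at r2
      have him := ih m (by omega) (by omega)
      omega
    · obtain ⟨m, rfl⟩ : ∃ m, n = 2 * m + 1 := ⟨n / 2, by omega⟩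
      have r1 := hrec (2 * m + 1) (by omega)
      rw [show (2 * m + 1 + 1) / 2 = m + 1 from by omega,
        show (2 * m + 1) / 2 = m from by omega] at r1
      have r2 := hrec (2 * m) (by omega)
      rw [show (2 * m + 1) / 2 = m from by omega, show 2 * m / 2 = m from by omega] at r2
      have him := ih (m + 1) (by omega) (by omega)
      rw [show m + 1 - 1 = m from rfl] at him
      have hsub : 2 * m + 1 - 1 = 2 * m := by omega
      rw [hsub]
      omega

include hk hp1 hp2 hrec in
lemma DK' : ∀ a, 1 ≤ a → ∀ n, 3 * 2 ^ (a - 1) < n → n ≤ 2 ^ (a + 1) →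
    pV n + 1 = pV (n - 1) + k := by
  intro a ha
  induction a, ha using Nat.le_induction with
  | base =>
    intro n h1 h2
    rw [show (3 * 2 ^ (1 - 1) : ℕ) = 3 from by norm_num] at h1
    rw [show (2:ℕ) ^ (1 + 1) = 4 from by norm_num] at h2
    have hn4 : n = 4 := by omega
    subst hn4
    have r1 := hrec 4 (by norm_num)
    norm_num at r1
    have r2 := hrec 3 (by norm_num)
    norm_num at r2
    rw [show (4:ℕ) - 1 = 3 from rfl, r1, r2, hp1]
    omega
  | succ a ha ih =>
    intro n h1 h2
    simp only [Nat.add_sub_cancel] at h1 h2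
    have e1 : 2 ^ (a + 1) = 2 ^ a * 2 := pow_succ 2 a
    have e1' : 2 ^ (a + 1 + 1) = 2 ^ (a + 1) * 2 := pow_succ 2 (a + 1)
    have e2 : 2 ^ a = 2 ^ (a - 1) * 2 := by rw [← pow_succ]; congr 1; omega
    have e3 : (2:ℕ) ^ (a - 1) ≥ 1 := Nat.one_le_two_pow
    have hn5 : 5 ≤ n := by omega
    rcases Nat.mod_two_eq_zero_or_one n with hpar | hpar
    · obtain ⟨m, rfl⟩ : ∃ m, n = 2 * m := ⟨n / 2, by omega⟩
      have r1 := hrec (2 * m) (by omega)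
      rw [show (2 * m + 1) / 2 = m from by omega, show 2 * m / 2 = m from by omega] at r1
      have r2 := hrec (2 * m - 1) (by omega)
      rw [show (2 * m - 1 + 1) / 2 = m from by omega,
        show (2 * m - 1) / 2 = m - 1 from by omega] at r2
      have him := ih m (by omega) (by omega)
      omega
    · obtain ⟨m, rfl⟩ : ∃ m, n = 2 * m + 1 := ⟨n / 2, by omega⟩
      have r1 := hrec (2 * m + 1) (by omega)
      rw [show (2 * m + 1 + 1) / 2 = m + 1 from by omega,
        show (2 * m + 1) / 2 = m from by omega] at r1
      have r2 := hrec (2 * m) (by omega)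
      rw [show (2 * m + 1) / 2 = m from by omega, show 2 * m / 2 = m from by omega] at r2
      have him := ih (m + 1) (by omega) (by omega)
      rw [show m + 1 - 1 = m from rfl] at him
      have hsub : 2 * m + 1 - 1 = 2 * m := by omega
      rw [hsub]
      omega

include hk hp0 hp1 hp2 hrec in
lemma step_values : ∀ n, 1 ≤ n → pV n = pV (n - 1) + k ∨ pV n + 1 = pV (n - 1) + k := by
  intro n hn
  rcases Nat.lt_or_ge n 3 with h3 | h3
  · interval_cases n
    · right; rw [show (1:ℕ) - 1 = 0 from rfl, hp0, hp1]; omega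
    · right; rw [show (2:ℕ) - 1 = 1 from rfl, hp1]; omega
  · set a := Nat.log 2 (n - 1) with hadef
    have ha1 : 2 ^ a ≤ n - 1 := Nat.pow_log_le_self 2 (by omega)
    have ha2 : n - 1 < 2 ^ (a + 1) := Nat.lt_pow_succ_log_self (by norm_num) _
    have haa : 1 ≤ a := by
      have := (Nat.le_log_iff_pow_le (by norm_num : 1 < 2) (by omega : n - 1 ≠ 0)).mpr
        (by omega : 2 ^ 1 ≤ n - 1)
      omega
    rcases le_or_gt n (3 * 2 ^ (a - 1)) with hc | hc
    · exact Or.inl (DK k pV hk hp1 hrec a haa n (by omega) hc)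
    · exact Or.inr (DK' k pV hk hp1 hp2 hrec a haa n hc (by omega))

end Arith


/-- For every `k ≥ 2`, the first difference sequence
`(p_{t_k}(n+1) − p_{t_k}(n))_{n ≥ 1}` of the subword complexity of the generalized
Thue–Morse word `t_k` is bounded and is not ultimately periodic. -/
theorem genThueMorse_complexity_first_differences_bounded_not_ultimately_periodic
    (k : ℕ) (hk : 2 ≤ k) :
    (∃ C : ℤ, ∀ n : ℕ, 1 ≤ n →
      |(complexity (genThueMorse k) (n + 1) : ℤ) - complexity (genThueMorse k) n| ≤ C) ∧
    ¬ ∃ (N P : ℕ), 1 ≤ P ∧ ∀ n : ℕ, 1 ≤ n → N ≤ n →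
      (complexity (genThueMorse k) (n + P + 1) : ℤ) - complexity (genThueMorse k) (n + P)
        = (complexity (genThueMorse k) (n + 1) : ℤ) - complexity (genThueMorse k) n := by
  have hp0 : complexity (Vword k) 0 = 1 := complexity_zero _
  have hp1 : complexity (Vword k) 1 = k := complexity_V_one hk
  have hp2 : complexity (Vword k) 2 + 1 = 2 * k := complexity_V_two hk
  have hrec : ∀ n, 3 ≤ n → complexity (Vword k) n
      = complexity (Vword k) ((n + 1) / 2) + complexity (Vword k) (n / 2) :=
    fun n hn => complexity_V_rec hk hn
  have hstep := step_values k (complexity (Vword k)) hk hp0 hp1 hp2 hrec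
  have hct : ∀ n, 1 ≤ n →
      complexity (genThueMorse k) n = k * complexity (Vword k) (n - 1) := by
    intro n hn
    have h := complexity_tm hk (n - 1)
    rwa [show n - 1 + 1 = n from by omega] at h
  have hk' : (2:ℤ) ≤ (k:ℤ) := by exact_mod_cast hk
  constructor
  · -- boundedness
    refine ⟨(k : ℤ) * k, ?_⟩
    intro n hn
    have c1 : complexity (genThueMorse k) (n + 1) = k * complexity (Vword k) n :=
      complexity_tm hk n
    have c2 := hct n hn
    rw [c1, c2]
    push_cast
    have hlow : (complexity (Vword k) (n - 1) : ℤ) ≤ (complexity (Vword k) n : ℤ) ∧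
        (complexity (Vword k) n : ℤ) ≤ (complexity (Vword k) (n - 1) : ℤ) + k := by
      rcases hstep n hn with h | h
      · have hc := congrArg (fun x : ℕ => (x : ℤ)) h
        push_cast at hc
        constructor <;> linarith
      · have hc := congrArg (fun x : ℕ => (x : ℤ)) h
        push_cast at hc
        constructor <;> linarith
    obtain ⟨hl1, hl2⟩ := hlow
    rw [abs_le]
    constructor <;> nlinarith
  · -- not ultimately periodic
    rintro ⟨N, P, hP, hper⟩
    set a := N + P + 2 with hadef
    have ha1 : 1 ≤ a := by omega
    have hpow : a - 1 < 2 ^ (a - 1) := Nat.lt_two_pow_self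
    set n := 3 * 2 ^ (a - 1) with hndef
    have e2 : (2:ℕ) ^ a = 2 ^ (a - 1) * 2 := by
      rw [← pow_succ, Nat.sub_add_cancel ha1]
    have e4 : (2:ℕ) ^ (a + 1) = 2 ^ (a - 1) * 2 * 2 := by
      rw [← pow_succ, ← pow_succ, Nat.sub_add_cancel ha1]
    have hn1 : 1 ≤ n := by omega
    have hnN : N ≤ n := by omega
    have hDKn : complexity (Vword k) n = complexity (Vword k) (n - 1) + k :=
      DK k (complexity (Vword k)) hk hp1 hrec a ha1 n (by omega) (le_refl _)
    have hDKnP : complexity (Vword k) (n + P) + 1 = complexity (Vword k) (n + P - 1) + k :=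
      DK' k (complexity (Vword k)) hk hp1 hp2 hrec a ha1 (n + P) (by omega) (by omega)
    have heq := hper n hn1 hnN
    have c1 : complexity (genThueMorse k) (n + 1) = k * complexity (Vword k) n :=
      complexity_tm hk n
    have c2 := hct n hn1
    have c3 : complexity (genThueMorse k) (n + P + 1) = k * complexity (Vword k) (n + P) :=
      complexity_tm hk (n + P)
    have c4 := hct (n + P) (by omega)
    rw [c1, c2, c3, c4] at heq
    push_cast at heq
    have hz1 : (complexity (Vword k) n : ℤ) = (complexity (Vword k) (n - 1) : ℤ) + k := by
      have hc := congrArg (fun x : ℕ => (x : ℤ)) hDKn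
      push_cast at hc
      linarith
    have hz2 : (complexity (Vword k) (n + P) : ℤ)
        = (complexity (Vword k) (n + P - 1) : ℤ) + k - 1 := by
      have hc := congrArg (fun x : ℕ => (x : ℤ)) hDKnP
      push_cast at hc
      linarith
    rw [hz1, hz2] at heq
    have : (k:ℤ) = 0 := by linarith [heq]
    linarith
end
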